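/- arXiv:1301.0541 — 7 statements merged into one kernel-verified Lean document; each statement's English description precedes it below -/
import Mathlib

section
/- Let F and F' be two axis-aligned frames such that ℓ(F), r(F), ℓ(F'), r(F') are pairwise distinct and b(F), t(F), b(F'), t(F') are pairwise distinct. Then F ∩ F' ≠ ∅ if and only if rect(F) ∩ rect(F') ≠ ∅ and neither rect(F) ⊆ rect(F') nor rect(F') ⊆ rect(F). -/
open Set

/-- An axis-aligned rectangle `[l, r] × [b, t]` with `l < r` and `b < t`. -/
structure Rect where
  l : ℝ
  r : ℝ
  b : ℝ
  t : ℝ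
  hlr : l < r
  hbt : b < t

noncomputable instance : DecidableEq Rect := Classical.decEq _

/-- The filling rectangle, as a subset of the plane. -/
def Rect.toSet (R : Rect) : Set (ℝ × ℝ) := Set.Icc R.l R.r ×ˢ Set.Icc R.b R.t

/-- The frame: the boundary (topological frontier) of the filling rectangle. -/
def Rect.frame (R : Rect) : Set (ℝ × ℝ) := frontier R.toSet

/-- A family of frames is in general position. -/
def GenPos (𝔉 : Finset Rect) : Prop :=
  ∀ F ∈ 𝔉, ∀ F' ∈ 𝔉, F ≠ F' →
    [F.l, F.r, F'.l, F'.r].Pairwise (· ≠ ·) ∧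
    [F.b, F.t, F'.b, F'.t].Pairwise (· ≠ ·)

/-- The intersection graph of a family of frames. -/
def frameGraph (𝔉 : Finset Rect) : SimpleGraph {F : Rect // F ∈ 𝔉} where
  Adj F F' := F ≠ F' ∧ (F.1.frame ∩ F'.1.frame).Nonempty
  symm := by
    constructor
    intro a b h
    exact ⟨h.1.symm, by rw [Set.inter_comm]; exact h.2⟩
  loopless := by constructor; intro a h; exact h.1 rfl

/-- The intersection of frames `F` and `F'` is rightward-directed. -/
def RightDir (F F' : Rect) : Prop :=
  F.l < F'.l ∧ F'.l < F.r ∧ F.r < F'.r ∧ F.b < F'.b ∧ F'.b < F'.t ∧ F'.t < F.t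

/-- The intersection of frames `F` and `F'` is leftward-directed. -/
def LeftDir (F F' : Rect) : Prop :=
  F'.l < F.l ∧ F.l < F'.r ∧ F'.r < F.r ∧ F.b < F'.b ∧ F'.b < F'.t ∧ F'.t < F.t

/-- The intersection of frames `F` and `F'` is upward-directed. -/
def UpDir (F F' : Rect) : Prop :=
  F.b < F'.b ∧ F'.b < F.t ∧ F.t < F'.t ∧ F.l < F'.l ∧ F'.l < F'.r ∧ F'.r < F.r

/-- The intersection of frames `F` and `F'` is downward-directed. -/
def DownDir (F F' : Rect) : Prop :=
  F'.b < F.b ∧ F.b < F'.t ∧ F'.t < F.t ∧ F.l < F'.l ∧ F'.l < F'.r ∧ F'.r < F.r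

/-- Any two intersecting frames of the family satisfy `P` (in one of the two orders). -/
def IntersectingPairsSatisfy (𝔉 : Finset Rect) (P : Rect → Rect → Prop) : Prop :=
  ∀ F ∈ 𝔉, ∀ F' ∈ 𝔉, F ≠ F' → (F.frame ∩ F'.frame).Nonempty → P F F' ∨ P F' F

def IsRightwardDirected (𝔉 : Finset Rect) : Prop := IntersectingPairsSatisfy 𝔉 RightDir

/-- A directed family of frames. -/
def IsDirectedFamily (𝔉 : Finset Rect) : Prop :=
  IntersectingPairsSatisfy 𝔉 RightDir ∨ IntersectingPairsSatisfy 𝔉 LeftDir ∨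
    IntersectingPairsSatisfy 𝔉 UpDir ∨ IntersectingPairsSatisfy 𝔉 DownDir

/-- `F` is enclosed by `F'`. -/
def Enclosed (F F' : Rect) : Prop :=
  F'.l < F.l ∧ F.r < F'.r ∧ F'.b < F.b ∧ F.t < F'.t

/-- A clean family of frames. -/
def Clean (𝔉 : Finset Rect) : Prop :=
  ¬ ∃ F₁ ∈ 𝔉, ∃ F₂ ∈ 𝔉, ∃ F₃ ∈ 𝔉, F₁ ≠ F₂ ∧
    (Rect.frame F₁ ∩ Rect.frame F₂).Nonempty ∧ Enclosed F₃ F₁ ∧ Enclosed F₃ F₂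

/-- The overlap graph of a family of rectangles: two rectangles are adjacent if they
intersect but neither is a subset of the other. -/
def overlapGraph (𝔉 : Finset Rect) : SimpleGraph {R : Rect // R ∈ 𝔉} where
  Adj R S := (R.1.toSet ∩ S.1.toSet).Nonempty ∧ ¬ R.1.toSet ⊆ S.1.toSet ∧ ¬ S.1.toSet ⊆ R.1.toSet
  symm := by
    constructor
    intro a b h
    exact ⟨by rw [Set.inter_comm]; exact h.1, h.2.2, h.2.1⟩
  loopless := by constructor; intro a h; exact h.2.1 subset_rfl

/-! A point common to both frames lies in both rectangles. If one rectangle contained the other,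
general position would make the inclusion strict on every side, so the smaller rectangle, and with
it the point, would lie in the interior of the larger one, off its frame.

Conversely, let `I × J` and `I' × J'` be the two rectangles. Overlapping intervals with no
endpoint of `I` in `I'` satisfy `I' ⊆ I`, and then the endpoints of `I'` lie in `I`. Chasing this
on both axes, unless one rectangle contains the other, some endpoint of `I` lies in `I'` while an
endpoint of `J'` lies in `J` (or the same with the rectangles swapped): a vertical side of one
frame crosses a horizontal side of the other. -/

lemma ne_and_ne_of_pairwise_ne {α : Type*} {a b c d : α} (h : [a, b, c, d].Pairwise (· ≠ ·)) :
    a ≠ c ∧ b ≠ d := by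
  simp only [List.pairwise_cons, List.forall_mem_cons] at h
  exact ⟨h.1.2.1, h.2.1.2.1⟩

section Intervals

variable {α : Type*} [LinearOrder α]

lemma Icc_subset_Ioo_of_Icc_subset_Icc {a b c d : α} (hab : a ≤ b) (h : Icc a b ⊆ Icc c d)
    (hac : a ≠ c) (hbd : b ≠ d) : Icc a b ⊆ Ioo c d := by
  obtain ⟨hca, hbd'⟩ := (Icc_subset_Icc_iff hab).1 h
  exact Icc_subset_Ioo (hca.lt_of_ne hac.symm) (hbd'.lt_of_ne hbd)

lemma Icc_subset_Icc_of_not_endpoint_mem {a b c d : α} (h : (Icc a b ∩ Icc c d).Nonempty)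
    (hcd : ¬ ({c, d} ∩ Icc a b).Nonempty) : Icc a b ⊆ Icc c d := by
  obtain ⟨x, ⟨hax, hxb⟩, hcx, hxd⟩ := h
  have hc : c ∉ Icc a b := fun hc ↦ hcd ⟨c, Or.inl rfl, hc⟩
  have hd : d ∉ Icc a b := fun hd ↦ hcd ⟨d, Or.inr rfl, hd⟩
  simp only [mem_Icc, not_and_or, not_le] at hc hd
  refine Icc_subset_Icc ?_ ?_
  · rcases hc with hc | hc
    · exact hc.le
    · exact absurd (hcx.trans hxb) hc.not_ge
  · rcases hd with hd | hd
    · exact absurd (hax.trans hxd) hd.not_ge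
    · exact hd.le

lemma endpoint_mem_of_Icc_subset_Icc {a b c d : α} (hab : a ≤ b) (h : Icc a b ⊆ Icc c d) :
    ({a, b} ∩ Icc c d).Nonempty :=
  ⟨a, Or.inl rfl, h (left_mem_Icc.2 hab)⟩

lemma endpoints_cross_of_overlap {a b c d a' b' c' d' : α}
    (hx : (Icc a b ∩ Icc a' b').Nonempty) (hy : (Icc c d ∩ Icc c' d').Nonempty)
    (h : ¬ (Icc a b ⊆ Icc a' b' ∧ Icc c d ⊆ Icc c' d'))
    (h' : ¬ (Icc a' b' ⊆ Icc a b ∧ Icc c' d' ⊆ Icc c d)) :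
    (({a, b} ∩ Icc a' b').Nonempty ∧ ({c', d'} ∩ Icc c d).Nonempty) ∨
      (({a', b'} ∩ Icc a b).Nonempty ∧ ({c, d} ∩ Icc c' d').Nonempty) := by
  by_contra hno
  simp only [not_or, not_and] at hno
  obtain ⟨hfirst, hsecond⟩ := hno
  by_cases hendI : ({a, b} ∩ Icc a' b').Nonempty
  · have hJ : Icc c d ⊆ Icc c' d' := Icc_subset_Icc_of_not_endpoint_mem hy (hfirst hendI)
    have hendJ := endpoint_mem_of_Icc_subset_Icc (nonempty_Icc.1 (hy.mono inter_subset_left)) hJ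
    exact h ⟨Icc_subset_Icc_of_not_endpoint_mem hx (hsecond · hendJ), hJ⟩
  · have hI : Icc a' b' ⊆ Icc a b := by
      rw [inter_comm] at hx
      exact Icc_subset_Icc_of_not_endpoint_mem hx hendI
    have hendI' := endpoint_mem_of_Icc_subset_Icc (nonempty_Icc.1 (hx.mono inter_subset_right)) hI
    have hJ : Icc c' d' ⊆ Icc c d := by
      rw [inter_comm] at hy
      exact Icc_subset_Icc_of_not_endpoint_mem hy (hsecond hendI')
    exact h' ⟨hI, hJ⟩

end Intervals

namespace Rect

variable {F F' : Rect}

lemma isClosed_toSet (R : Rect) : IsClosed R.toSet := isClosed_Icc.prod isClosed_Icc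

lemma frame_subset_toSet (R : Rect) : R.frame ⊆ R.toSet := R.isClosed_toSet.frontier_subset

lemma interior_toSet (R : Rect) : interior R.toSet = Ioo R.l R.r ×ˢ Ioo R.b R.t := by
  rw [toSet, interior_prod_eq, interior_Icc, interior_Icc]

lemma frame_eq (R : Rect) :
    R.frame = Icc R.l R.r ×ˢ {R.b, R.t} ∪ {R.l, R.r} ×ˢ Icc R.b R.t := by
  rw [frame, toSet, frontier_prod_eq, closure_Icc, closure_Icc, frontier_Icc R.hlr.le,
    frontier_Icc R.hbt.le]

lemma toSet_nonempty (R : Rect) : R.toSet.Nonempty :=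
  (nonempty_Icc.2 R.hlr.le).prod (nonempty_Icc.2 R.hbt.le)

lemma toSet_subset_toSet_iff :
    F.toSet ⊆ F'.toSet ↔ Icc F.l F.r ⊆ Icc F'.l F'.r ∧ Icc F.b F.t ⊆ Icc F'.b F'.t :=
  prod_subset_prod_iff' F.toSet_nonempty

lemma toSet_inter_nonempty_iff :
    (F.toSet ∩ F'.toSet).Nonempty ↔
      (Icc F.l F.r ∩ Icc F'.l F'.r).Nonempty ∧ (Icc F.b F.t ∩ Icc F'.b F'.t).Nonempty := by
  rw [toSet, toSet, prod_inter_prod, prod_nonempty_iff]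

lemma not_toSet_subset_of_frame_inter_nonempty (hl : F.l ≠ F'.l) (hr : F.r ≠ F'.r)
    (hb : F.b ≠ F'.b) (ht : F.t ≠ F'.t) (h : (F.frame ∩ F'.frame).Nonempty) :
    ¬ F.toSet ⊆ F'.toSet := by
  intro hsub
  obtain ⟨p, hp, hp'⟩ := h
  rw [toSet_subset_toSet_iff] at hsub
  have hint : F.toSet ⊆ interior F'.toSet := by
    rw [interior_toSet]
    exact prod_mono (Icc_subset_Ioo_of_Icc_subset_Icc F.hlr.le hsub.1 hl hr)
      (Icc_subset_Ioo_of_Icc_subset_Icc F.hbt.le hsub.2 hb ht)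
  exact disjoint_interior_frontier.le_bot ⟨hint (F.frame_subset_toSet hp), hp'⟩

lemma frame_inter_nonempty_of_overlap (hmeet : (F.toSet ∩ F'.toSet).Nonempty)
    (hF : ¬ F.toSet ⊆ F'.toSet) (hF' : ¬ F'.toSet ⊆ F.toSet) :
    (F.frame ∩ F'.frame).Nonempty := by
  rw [toSet_inter_nonempty_iff] at hmeet
  rw [toSet_subset_toSet_iff] at hF hF'
  rw [frame_eq, frame_eq]
  rcases endpoints_cross_of_overlap hmeet.1 hmeet.2 hF hF' with
    ⟨⟨x, hxF, hxF'⟩, ⟨y, hyF', hyF⟩⟩ | ⟨⟨x, hxF', hxF⟩, ⟨y, hyF, hyF'⟩⟩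
  · exact ⟨(x, y), Or.inr ⟨hxF, hyF⟩, Or.inl ⟨hxF', hyF'⟩⟩
  · exact ⟨(x, y), Or.inl ⟨hxF, hyF⟩, Or.inr ⟨hxF', hyF'⟩⟩

end Rect

/-- Two frames in general position intersect if and only if their filling rectangles
intersect and neither filling rectangle is contained in the other. -/
theorem stmt1 (F F' : Rect)
    (h1 : [F.l, F.r, F'.l, F'.r].Pairwise (· ≠ ·))
    (h2 : [F.b, F.t, F'.b, F'.t].Pairwise (· ≠ ·)) :
    F.frame ∩ F'.frame ≠ ∅ ↔
      ((F.toSet ∩ F'.toSet).Nonempty ∧ ¬ F.toSet ⊆ F'.toSet ∧ ¬ F'.toSet ⊆ F.toSet) := by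
  obtain ⟨hl, hr⟩ := ne_and_ne_of_pairwise_ne h1
  obtain ⟨hb, ht⟩ := ne_and_ne_of_pairwise_ne h2
  rw [← nonempty_iff_ne_empty]
  constructor
  · intro h
    refine ⟨h.mono (inter_subset_inter F.frame_subset_toSet F'.frame_subset_toSet),
      Rect.not_toSet_subset_of_frame_inter_nonempty hl hr hb ht h,
      Rect.not_toSet_subset_of_frame_inter_nonempty hl.symm hr.symm hb.symm ht.symm ?_⟩
    rwa [inter_comm]
  · rintro ⟨hmeet, hF, hF'⟩
    exact Rect.frame_inter_nonempty_of_overlap hmeet hF hF'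
end

section
/- For every integer k ≥ 1 there exists a finite family R of closed axis-aligned rectangles in ℝ² such that the overlap graph of R is triangle-free, R has at most 2^(2^(2k)) members, and the chromatic number of the overlap graph of R is at least k. -/
open Set

/-!
Burling's construction. A probe is a box together with the rectangles of the family that cross
it (`Rect.Crosses`: span it horizontally, rise above it, bottom edge off its height); all other
rectangles of the family avoid the box. A rectangle placed strictly inside a probe box is then
contained in or disjoint from every rectangle of the family.

Starting from one empty probe, each step augments the family `F` by a diagonal rectangle for each
probe `Q`, overlapping exactly the rectangles crossing `Q`, and replaces `Q` by a left probe,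
crossed by the rectangles crossing `Q`, and a top probe, crossed by the diagonal alone. A copy of
this augmented family is placed inside every probe box `P` of `F`, and each probe of the copy is
also crossed by the rectangles crossing `P`. Overlaps stay inside the old family or inside one
copy, so no triangle appears: the diagonal of `Q` overlaps only rectangles crossing `Q`, and
those pairwise do not overlap.

In a proper colouring some probe `P` of `F` sees a set `X` of `k` colours, and in the copy inside
`P` some probe `Q` sees a set `Y` of `k` colours. Either `X ∪ Y` has more than `k` colours, seen
by the left probe of `Q` in `P`, or `X ⊆ Y`, and then the diagonal of `Q` has a colour outside
`X`, seen together with `X` by the top probe. Sizes grow from `N` to at most `N + 2 N² ≤ N⁴`.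
-/

namespace Rect

def Within (R S : Rect) : Prop := S.l ≤ R.l ∧ R.r ≤ S.r ∧ S.b ≤ R.b ∧ R.t ≤ S.t

def Meets (R S : Rect) : Prop := R.l ≤ S.r ∧ S.l ≤ R.r ∧ R.b ≤ S.t ∧ S.b ≤ R.t

def Overlaps (R S : Rect) : Prop := R.Meets S ∧ ¬ R.Within S ∧ ¬ S.Within R

theorem toSet_eq_Icc (R : Rect) : R.toSet = Icc (R.l, R.b) (R.r, R.t) := Icc_prod_Icc _ _ _ _

theorem toSet_subset_toSet_iff_s2 {R S : Rect} : R.toSet ⊆ S.toSet ↔ R.Within S := by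
  rw [toSet_eq_Icc, toSet_eq_Icc, Icc_subset_Icc_iff (Prod.mk_le_mk.2 ⟨R.hlr.le, R.hbt.le⟩)]
  simp only [Prod.mk_le_mk, Within]
  tauto

theorem toSet_inter_nonempty_iff_s2 {R S : Rect} : (R.toSet ∩ S.toSet).Nonempty ↔ R.Meets S := by
  rw [toSet_eq_Icc, toSet_eq_Icc, Icc_inter_Icc, nonempty_Icc]
  simp only [Prod.mk_sup_mk, Prod.mk_inf_mk, Prod.mk_le_mk, sup_le_iff, le_inf_iff, Meets]
  constructor
  · rintro ⟨⟨⟨-, h1⟩, h2, -⟩, ⟨-, h3⟩, h4, -⟩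
    exact ⟨h2, h1, h4, h3⟩
  · rintro ⟨h2, h1, h4, h3⟩
    exact ⟨⟨⟨R.hlr.le, h1⟩, h2, S.hlr.le⟩, ⟨R.hbt.le, h3⟩, h4, S.hbt.le⟩

theorem Meets.symm {R S : Rect} (h : R.Meets S) : S.Meets R := ⟨h.2.1, h.1, h.2.2.2, h.2.2.1⟩

theorem Overlaps.symm {R S : Rect} (h : R.Overlaps S) : S.Overlaps R := ⟨h.1.symm, h.2.2, h.2.1⟩

theorem not_overlaps_self (R : Rect) : ¬ R.Overlaps R :=
  fun h => h.2.1 ⟨le_rfl, le_rfl, le_rfl, le_rfl⟩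

def Crosses (R B : Rect) : Prop :=
  R.l < B.l ∧ B.r < R.r ∧ B.t < R.t ∧ (R.b < B.b ∨ B.t < R.b)

def Avoids (R B : Rect) : Prop := R.r ≤ B.l ∨ B.r ≤ R.l ∨ R.t ≤ B.b

def InColumn (R B : Rect) : Prop := B.l < R.l ∧ R.r < B.r

def ColumnsDisjoint (B B' : Rect) : Prop := B.r ≤ B'.l ∨ B'.r ≤ B.l

variable {R S Z B B' : Rect}

theorem Overlaps.meets (h : R.Overlaps S) : R.Meets S := h.1

theorem Crosses.mono (h : R.Crosses B) (hZ : Enclosed Z B) : R.Crosses Z := by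
  obtain ⟨z1, z2, z3, z4⟩ := hZ
  have := Z.hbt
  refine ⟨by linarith [h.1], by linarith [h.2.1], by linarith [h.2.2.1], ?_⟩
  rcases h.2.2.2 with h | h
  · exact Or.inl (by linarith)
  · exact Or.inr (by linarith)

theorem Avoids.mono (h : R.Avoids B) (hZ : Enclosed Z B) : R.Avoids Z := by
  obtain ⟨z1, z2, z3, z4⟩ := hZ
  rcases h with h | h | h
  · exact Or.inl (by linarith)
  · exact Or.inr (Or.inl (by linarith))
  · exact Or.inr (Or.inr (by linarith))

theorem ColumnsDisjoint.mono (h : B.ColumnsDisjoint B') (hR : R.InColumn B)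
    (hS : S.InColumn B') : R.ColumnsDisjoint S := by
  rcases h with h | h
  · exact Or.inl (by linarith [hR.2, hS.1])
  · exact Or.inr (by linarith [hR.1, hS.2])

theorem ColumnsDisjoint.symm (h : B.ColumnsDisjoint B') : B'.ColumnsDisjoint B := Or.symm h

theorem ColumnsDisjoint.avoids (h : R.ColumnsDisjoint S) : R.Avoids S := by
  rcases h with h | h
  · exact Or.inl h
  · exact Or.inr (Or.inl h)

theorem ColumnsDisjoint.not_meets (h : B.ColumnsDisjoint B') (hR : R.InColumn B)
    (hS : S.InColumn B') : ¬ R.Meets S := by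
  rintro ⟨h1, h2, -, -⟩
  rcases h with h | h
  · linarith [hR.2, hS.1]
  · linarith [hR.1, hS.2]

theorem not_overlaps_of_crosses (hR : R.Crosses B) (hZ : Enclosed Z B) : ¬ Z.Overlaps R := by
  rintro ⟨⟨-, -, h3, h4⟩, hZR, -⟩
  obtain ⟨z1, z2, z3, z4⟩ := hZ
  obtain ⟨c1, c2, c3, c4 | c4⟩ := hR
  · exact hZR ⟨by linarith, by linarith, by linarith, by linarith⟩
  · linarith

theorem not_meets_of_avoids (hR : R.Avoids B) (hZ : Enclosed Z B) : ¬ Z.Meets R := by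
  rintro ⟨h1, h2, h3, -⟩
  obtain ⟨z1, z2, z3, z4⟩ := hZ
  rcases hR with h | h | h <;> linarith

end Rect

theorem overlapGraph_adj {𝔉 : Finset Rect} {R S : {R : Rect // R ∈ 𝔉}} :
    (overlapGraph 𝔉).Adj R S ↔ R.1.Overlaps S.1 := by
  simp only [overlapGraph, Rect.Overlaps, Rect.toSet_inter_nonempty_iff_s2,
    Rect.toSet_subset_toSet_iff_s2]

theorem Enclosed.trans {R S Z : Rect} (h : Enclosed R S) (h' : Enclosed S Z) : Enclosed R Z :=
  ⟨h'.1.trans h.1, h.2.1.trans h'.2.1, h'.2.2.1.trans h.2.2.1, h.2.2.2.trans h'.2.2.2⟩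

theorem Enclosed.inColumn {R B : Rect} (h : Enclosed R B) : R.InColumn B := ⟨h.1, h.2.1⟩

namespace Rect

def map {f g : ℝ → ℝ} (hf : StrictMono f) (hg : StrictMono g) (R : Rect) : Rect :=
  ⟨f R.l, f R.r, g R.b, g R.t, hf R.hlr, hg R.hbt⟩

section map

variable {f g : ℝ → ℝ} (hf : StrictMono f) (hg : StrictMono g) {R S : Rect}

theorem overlaps_map_iff : (R.map hf hg).Overlaps (S.map hf hg) ↔ R.Overlaps S := by
  simp only [Overlaps, Meets, Within, map, hf.le_iff_le, hg.le_iff_le]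

theorem enclosed_map_iff : Enclosed (R.map hf hg) (S.map hf hg) ↔ Enclosed R S := by
  simp only [Enclosed, map, hf.lt_iff_lt, hg.lt_iff_lt]

theorem crosses_map_iff : (R.map hf hg).Crosses (S.map hf hg) ↔ R.Crosses S := by
  simp only [Crosses, map, hf.lt_iff_lt, hg.lt_iff_lt]

theorem avoids_map_iff : (R.map hf hg).Avoids (S.map hf hg) ↔ R.Avoids S := by
  simp only [Avoids, map, hf.le_iff_le, hg.le_iff_le]

theorem columnsDisjoint_map_iff :
    (R.map hf hg).ColumnsDisjoint (S.map hf hg) ↔ R.ColumnsDisjoint S := by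
  simp only [ColumnsDisjoint, map, hf.le_iff_le]

end map

theorem strictMono_affine {a b : ℝ} (h : a < b) :
    StrictMono fun x : ℝ => a + (b - a) * (x + 1) / 3 :=
  fun x y hxy => by have := sub_pos.2 h; simp only; gcongr

noncomputable def embed (B : Rect) : Rect → Rect :=
  map (strictMono_affine B.hlr) (strictMono_affine B.hbt)

end Rect

def unitSquare : Rect := ⟨0, 1, 0, 1, zero_lt_one, zero_lt_one⟩

/-- Families live in `unitSquare`, but the diagonals added by `Family.augment` reach up to
height `3 / 2`; copies are therefore embedded from this larger square. -/
def window : Rect := ⟨-1, 2, -1, 2, by norm_num, by norm_num⟩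

theorem unitSquare_enclosed_window : Enclosed unitSquare window := by
  simp only [Enclosed, unitSquare, window]; norm_num

theorem Rect.embed_window (B : Rect) : B.embed window = B := by
  simp only [Rect.embed, Rect.map, window]
  congr 1 <;> ring

theorem Rect.enclosed_embed {B R : Rect} (h : Enclosed R window) : Enclosed (B.embed R) B := by
  have h' : Enclosed (B.embed R) (B.embed window) := (Rect.enclosed_map_iff _ _).2 h
  rwa [B.embed_window] at h'

namespace Rect

variable (B : Rect) {R : Rect}

noncomputable def leftBox : Rect :=
  ⟨(7 * B.l + B.r) / 8, (3 * B.l + B.r) / 4, (2 * B.b + B.t) / 3, (B.b + 2 * B.t) / 3,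
    by linarith [B.hlr], by linarith [B.hbt]⟩

/-- `max 1 B.t` is `1` for boxes in `unitSquare`; the `max` makes `b < t` hold for every `B`. -/
noncomputable def diagonal : Rect :=
  ⟨(5 * B.l + 3 * B.r) / 8, (B.l + 3 * B.r) / 4, (B.b + B.t) / 2, max 1 B.t + 1 / 2,
    by linarith [B.hlr], by linarith [B.hbt, le_max_right 1 B.t]⟩

noncomputable def topBox : Rect :=
  ⟨(B.l + B.r) / 2, (3 * B.l + 5 * B.r) / 8, max 1 B.t, max 1 B.t + 1 / 4,
    by linarith [B.hlr], by linarith⟩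

theorem leftBox_enclosed : Enclosed B.leftBox B := by
  simp only [Enclosed, leftBox]
  refine ⟨?_, ?_, ?_, ?_⟩ <;> linarith [B.hlr, B.hbt]

theorem diagonal_inColumn : B.diagonal.InColumn B := by
  simp only [InColumn, diagonal]
  constructor <;> linarith [B.hlr]

theorem topBox_inColumn : B.topBox.InColumn B := by
  simp only [InColumn, topBox]
  constructor <;> linarith [B.hlr]

theorem leftBox_columnsDisjoint_topBox : B.leftBox.ColumnsDisjoint B.topBox :=
  Or.inl (by simp only [leftBox, topBox]; linarith [B.hlr])

theorem diagonal_avoids_leftBox : B.diagonal.Avoids B.leftBox :=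
  Or.inr (Or.inl (by simp only [leftBox, diagonal]; linarith [B.hlr]))

theorem diagonal_crosses_topBox : B.diagonal.Crosses B.topBox := by
  simp only [Crosses, diagonal, topBox]
  refine ⟨by linarith [B.hlr], by linarith [B.hlr], by linarith,
    Or.inl (by linarith [B.hbt, le_max_right 1 B.t])⟩

theorem avoids_topBox (h : R.t ≤ 1) : R.Avoids B.topBox :=
  Or.inr (Or.inr (h.trans (le_max_left 1 B.t)))

variable {B}

theorem overlaps_diagonal (hR : R.Crosses B) (h : R.t < 1) : B.diagonal.Overlaps R := by
  obtain ⟨c1, c2, c3, -⟩ := hR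
  have := B.hlr; have := B.hbt; have := R.hbt; have := le_max_left 1 B.t
  simp only [Overlaps, Meets, Within, diagonal]
  refine ⟨⟨by linarith, by linarith, by linarith, by linarith⟩, ?_, ?_⟩
  · rintro ⟨-, -, -, h'⟩; linarith
  · rintro ⟨h', -, -, -⟩; linarith

theorem not_meets_diagonal (hR : R.Avoids B) : ¬ B.diagonal.Meets R := by
  simp only [Meets, diagonal]
  have := B.hlr; have := B.hbt
  rintro ⟨h1, h2, h3, -⟩
  rcases hR with h | h | h <;> linarith

theorem diagonal_enclosed_window (hB : Enclosed B unitSquare) : Enclosed B.diagonal window := by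
  obtain ⟨h1, h2, h3, h4⟩ : 0 < B.l ∧ B.r < 1 ∧ 0 < B.b ∧ B.t < 1 := hB
  have : max 1 B.t < 3 / 2 := max_lt (by norm_num) (by linarith)
  simp only [Enclosed, diagonal, window]
  refine ⟨?_, ?_, ?_, ?_⟩ <;> linarith [B.hlr, B.hbt]

theorem topBox_enclosed_window (hB : Enclosed B unitSquare) : Enclosed B.topBox window := by
  obtain ⟨h1, h2, h3, h4⟩ : 0 < B.l ∧ B.r < 1 ∧ 0 < B.b ∧ B.t < 1 := hB
  have : max 1 B.t < 3 / 2 := max_lt (by norm_num) (by linarith)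
  simp only [Enclosed, topBox, window]
  refine ⟨?_, ?_, ?_, ?_⟩ <;> linarith [B.hlr, le_max_left 1 B.t]

end Rect

namespace Burling

open Finset

structure Probe where
  box : Rect
  crossing : Finset Rect

noncomputable instance : DecidableEq Probe := Classical.decEq _

structure Family where
  rects : Finset Rect
  probes : Finset Probe

def TriangleFree (s : Finset Rect) : Prop :=
  ∀ R ∈ s, ∀ S ∈ s, ∀ T ∈ s, R.Overlaps S → R.Overlaps T → S.Overlaps T → False

def IsProperColouring (s : Finset Rect) (φ : Rect → ℕ) : Prop :=
  ∀ R ∈ s, ∀ S ∈ s, R.Overlaps S → φ R ≠ φ S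

theorem IsProperColouring.mono {s t : Finset Rect} {φ : Rect → ℕ} (h : IsProperColouring t φ)
    (hst : s ⊆ t) : IsProperColouring s φ :=
  fun R hR S hS => h R (hst hR) S (hst hS)

namespace Family

structure Admissible (C : Rect) (F : Family) : Prop where
  rect_enclosed : ∀ R ∈ F.rects, Enclosed R C
  box_enclosed : ∀ P ∈ F.probes, Enclosed P.box C
  crossing_subset : ∀ P ∈ F.probes, P.crossing ⊆ F.rects
  crosses : ∀ P ∈ F.probes, ∀ R ∈ P.crossing, R.Crosses P.box
  avoids : ∀ P ∈ F.probes, ∀ R ∈ F.rects, R ∉ P.crossing → R.Avoids P.box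
  columnsDisjoint :
    ∀ P ∈ F.probes, ∀ P' ∈ F.probes, P ≠ P' → P.box.ColumnsDisjoint P'.box
  crossing_not_overlaps :
    ∀ P ∈ F.probes, ∀ R ∈ P.crossing, ∀ S ∈ P.crossing, ¬ R.Overlaps S
  triangleFree : TriangleFree F.rects

def Forces (k : ℕ) (F : Family) : Prop :=
  ∀ φ, IsProperColouring F.rects φ → ∃ P ∈ F.probes, k ≤ (P.crossing.image φ).card

def ForcesNewColour (k : ℕ) (F : Family) : Prop :=
  ∀ φ, IsProperColouring F.rects φ → ∀ X : Finset ℕ, k ≤ X.card →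
    ∃ P ∈ F.probes, k + 1 ≤ (X ∪ P.crossing.image φ).card

end Family

noncomputable def Probe.left (Q : Probe) : Probe := ⟨Q.box.leftBox, Q.crossing⟩

noncomputable def Probe.top (Q : Probe) : Probe := ⟨Q.box.topBox, {Q.box.diagonal}⟩

theorem Probe.inColumn_of_eq_left_or_top {Q π : Probe} (h : π = Q.left ∨ π = Q.top) :
    π.box.InColumn Q.box := by
  rcases h with rfl | rfl
  · exact Q.box.leftBox_enclosed.inColumn
  · exact Q.box.topBox_inColumn

namespace Family

noncomputable def augment (F : Family) : Family where
  rects := F.rects ∪ F.probes.image fun Q => Q.box.diagonal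
  probes := F.probes.biUnion fun Q => {Q.left, Q.top}

variable {C : Rect} {F : Family} {k : ℕ} {Q Q' : Probe} {R S : Rect}

theorem mem_augment_rects :
    R ∈ F.augment.rects ↔ R ∈ F.rects ∨ ∃ Q ∈ F.probes, Q.box.diagonal = R := by
  simp [augment]

theorem mem_augment_probes {π : Probe} :
    π ∈ F.augment.probes ↔ ∃ Q ∈ F.probes, π = Q.left ∨ π = Q.top := by
  simp [augment]

theorem diagonal_mem_augment (hQ : Q ∈ F.probes) : Q.box.diagonal ∈ F.augment.rects :=
  mem_augment_rects.2 (Or.inr ⟨Q, hQ, rfl⟩)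

theorem Admissible.not_overlaps_diagonal (hF : F.Admissible C) (hQ : Q ∈ F.probes)
    (hQ' : Q' ∈ F.probes) : ¬ Q.box.diagonal.Overlaps Q'.box.diagonal := by
  rcases eq_or_ne Q Q' with rfl | hne
  · exact Rect.not_overlaps_self _
  · exact fun h => (hF.columnsDisjoint Q hQ Q' hQ' hne).not_meets
      Q.box.diagonal_inColumn Q'.box.diagonal_inColumn h.meets

theorem Admissible.mem_crossing_of_overlaps_diagonal (hF : F.Admissible C) (hQ : Q ∈ F.probes)
    (hR : R ∈ F.augment.rects) (h : Q.box.diagonal.Overlaps R) : R ∈ Q.crossing := by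
  rcases mem_augment_rects.1 hR with hR | ⟨Q', hQ', rfl⟩
  · by_contra hn
    exact Rect.not_meets_diagonal (hF.avoids Q hQ R hR hn) h.meets
  · exact absurd h (hF.not_overlaps_diagonal hQ hQ')

theorem Admissible.augment_triangleFree (hF : F.Admissible C) : TriangleFree F.augment.rects := by
  have diagonal_free : ∀ Q ∈ F.probes, ∀ R ∈ F.augment.rects, ∀ S ∈ F.augment.rects,
      Q.box.diagonal.Overlaps R → Q.box.diagonal.Overlaps S → ¬ R.Overlaps S :=
    fun Q hQ R hR S hS hQR hQS => hF.crossing_not_overlaps Q hQ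
      R (hF.mem_crossing_of_overlaps_diagonal hQ hR hQR)
      S (hF.mem_crossing_of_overlaps_diagonal hQ hS hQS)
  intro R hR S hS T hT hRS hRT hST
  rcases mem_augment_rects.1 hR with hR₀ | ⟨Q, hQ, rfl⟩
  · rcases mem_augment_rects.1 hS with hS₀ | ⟨Q, hQ, rfl⟩
    · rcases mem_augment_rects.1 hT with hT₀ | ⟨Q, hQ, rfl⟩
      · exact hF.triangleFree R hR₀ S hS₀ T hT₀ hRS hRT hST
      · exact diagonal_free Q hQ R hR S hS hRT.symm hST.symm hRS
    · exact diagonal_free Q hQ R hR T hT hRS.symm hST hRT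
  · exact diagonal_free Q hQ S hS T hT hRS hRT hST

theorem Admissible.augment_avoids (hF : F.Admissible unitSquare) (hQ : Q ∈ F.probes)
    {π : Probe} (hπ : π = Q.left ∨ π = Q.top) (hR : R ∈ F.augment.rects)
    (hRπ : R ∉ π.crossing) : R.Avoids π.box := by
  rcases mem_augment_rects.1 hR with hR | ⟨Q', hQ', rfl⟩
  · rcases hπ with rfl | rfl
    · exact (hF.avoids Q hQ R hR hRπ).mono Q.box.leftBox_enclosed
    · exact Q.box.avoids_topBox (hF.rect_enclosed R hR).2.2.2.le
  rcases eq_or_ne Q' Q with rfl | hne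
  · rcases hπ with rfl | rfl
    · exact Q'.box.diagonal_avoids_leftBox
    · exact absurd (mem_singleton_self _) hRπ
  · exact ((hF.columnsDisjoint Q' hQ' Q hQ hne).mono Q'.box.diagonal_inColumn
      (Probe.inColumn_of_eq_left_or_top hπ)).avoids

theorem Admissible.augment_columnsDisjoint (hF : F.Admissible C) {π π' : Probe}
    (hπ : π ∈ F.augment.probes) (hπ' : π' ∈ F.augment.probes) (hne : π ≠ π') :
    π.box.ColumnsDisjoint π'.box := by
  obtain ⟨Q, hQ, hπQ⟩ := mem_augment_probes.1 hπ
  obtain ⟨Q', hQ', hπQ'⟩ := mem_augment_probes.1 hπ'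
  rcases eq_or_ne Q Q' with rfl | hQQ
  · rcases hπQ with rfl | rfl <;> rcases hπQ' with rfl | rfl
    · exact absurd rfl hne
    · exact Q.box.leftBox_columnsDisjoint_topBox
    · exact Q.box.leftBox_columnsDisjoint_topBox.symm
    · exact absurd rfl hne
  · exact (hF.columnsDisjoint Q hQ Q' hQ' hQQ).mono
      (Probe.inColumn_of_eq_left_or_top hπQ) (Probe.inColumn_of_eq_left_or_top hπQ')

theorem Admissible.augment (hF : F.Admissible unitSquare) : F.augment.Admissible window where
  rect_enclosed R hR := by
    rcases mem_augment_rects.1 hR with hR | ⟨Q, hQ, rfl⟩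
    · exact (hF.rect_enclosed R hR).trans unitSquare_enclosed_window
    · exact Rect.diagonal_enclosed_window (hF.box_enclosed Q hQ)
  box_enclosed π hπ := by
    obtain ⟨Q, hQ, rfl | rfl⟩ := mem_augment_probes.1 hπ
    · exact Q.box.leftBox_enclosed.trans
        ((hF.box_enclosed Q hQ).trans unitSquare_enclosed_window)
    · exact Rect.topBox_enclosed_window (hF.box_enclosed Q hQ)
  crossing_subset π hπ := by
    obtain ⟨Q, hQ, rfl | rfl⟩ := mem_augment_probes.1 hπ
    · exact (hF.crossing_subset Q hQ).trans subset_union_left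
    · exact singleton_subset_iff.2 (diagonal_mem_augment hQ)
  crosses π hπ R hR := by
    obtain ⟨Q, hQ, rfl | rfl⟩ := mem_augment_probes.1 hπ
    · exact (hF.crosses Q hQ R hR).mono Q.box.leftBox_enclosed
    · rw [mem_singleton.1 hR]
      exact Q.box.diagonal_crosses_topBox
  avoids π hπ R hR hRπ := by
    obtain ⟨Q, hQ, hπQ⟩ := mem_augment_probes.1 hπ
    exact hF.augment_avoids hQ hπQ hR hRπ
  columnsDisjoint π hπ π' hπ' hne := hF.augment_columnsDisjoint hπ hπ' hne
  crossing_not_overlaps π hπ R hR S hS := by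
    obtain ⟨Q, hQ, rfl | rfl⟩ := mem_augment_probes.1 hπ
    · exact hF.crossing_not_overlaps Q hQ R hR S hS
    · rw [mem_singleton.1 hR, mem_singleton.1 hS]
      exact Rect.not_overlaps_self _
  triangleFree := hF.augment_triangleFree

theorem Admissible.forcesNewColour_augment (hF : F.Admissible unitSquare) (h : F.Forces k) :
    F.augment.ForcesNewColour k := by
  intro φ hφ X hX
  obtain ⟨Q, hQ, hQk⟩ := h φ (hφ.mono subset_union_left)
  have hmem : ∀ π, (π = Q.left ∨ π = Q.top) → π ∈ F.augment.probes :=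
    fun π hπ => mem_augment_probes.2 ⟨Q, hQ, hπ⟩
  by_cases hgrow : k + 1 ≤ (X ∪ Q.crossing.image φ).card
  · exact ⟨Q.left, hmem _ (Or.inl rfl), hgrow⟩
  have hXQ : X ⊆ Q.crossing.image φ := by
    have hY : Q.crossing.image φ = X ∪ Q.crossing.image φ :=
      Finset.eq_of_subset_of_card_le subset_union_right (by omega)
    rw [hY]
    exact subset_union_left
  have hD : φ Q.box.diagonal ∉ X := fun hD => by
    obtain ⟨S, hS, hSD⟩ := mem_image.1 (hXQ hD)
    have hS' := hF.crossing_subset Q hQ hS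
    exact hφ _ (diagonal_mem_augment hQ) S (mem_union_left _ hS')
      (Rect.overlaps_diagonal (hF.crosses Q hQ S hS) (hF.rect_enclosed S hS').2.2.2) hSD.symm
  refine ⟨Q.top, hmem _ (Or.inr rfl), ?_⟩
  show k + 1 ≤ (X ∪ ({Q.box.diagonal} : Finset Rect).image φ).card
  rw [Finset.image_singleton, Finset.union_singleton, card_insert_of_notMem hD]
  omega

end Family

noncomputable def Probe.nest (P Q : Probe) : Probe :=
  ⟨P.box.embed Q.box, P.crossing ∪ Q.crossing.image P.box.embed⟩

namespace Family

noncomputable def nest (F G : Family) : Family where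
  rects := F.rects ∪ F.probes.biUnion fun P => G.rects.image P.box.embed
  probes := F.probes.biUnion fun P => G.probes.image P.nest

variable {C : Rect} {F G : Family} {k : ℕ} {P P' Q Q' : Probe} {R S Z : Rect}

theorem mem_nest_rects :
    R ∈ (F.nest G).rects ↔
      R ∈ F.rects ∨ ∃ P ∈ F.probes, ∃ S ∈ G.rects, P.box.embed S = R := by
  simp [nest]

theorem mem_nest_probes {π : Probe} :
    π ∈ (F.nest G).probes ↔ ∃ P ∈ F.probes, ∃ Q ∈ G.probes, P.nest Q = π := by
  simp [nest]

theorem embed_mem_nest (hP : P ∈ F.probes) (hS : S ∈ G.rects) :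
    P.box.embed S ∈ (F.nest G).rects :=
  mem_nest_rects.2 (Or.inr ⟨P, hP, S, hS, rfl⟩)

theorem Admissible.not_overlaps_of_enclosed (hF : F.Admissible C) (hP : P ∈ F.probes)
    (hZ : Enclosed Z P.box) (hR : R ∈ F.rects) : ¬ Z.Overlaps R := by
  by_cases hRP : R ∈ P.crossing
  · exact Rect.not_overlaps_of_crosses (hF.crosses P hP R hRP) hZ
  · exact fun h => Rect.not_meets_of_avoids (hF.avoids P hP R hR hRP) hZ h.meets

theorem Admissible.embed_enclosed (hG : G.Admissible window) (hS : S ∈ G.rects) :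
    Enclosed (P.box.embed S) P.box :=
  Rect.enclosed_embed (hG.rect_enclosed S hS)

theorem Admissible.mem_rects_of_overlaps (hF : F.Admissible C) (hG : G.Admissible window)
    (hR : R ∈ F.rects) (hS : S ∈ (F.nest G).rects) (h : R.Overlaps S) : S ∈ F.rects := by
  rcases mem_nest_rects.1 hS with hS | ⟨P, hP, S₀, hS₀, rfl⟩
  · exact hS
  · exact absurd h.symm (hF.not_overlaps_of_enclosed hP (hG.embed_enclosed hS₀) hR)

theorem Admissible.exists_eq_embed_of_overlaps (hF : F.Admissible C) (hG : G.Admissible window)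
    (hP : P ∈ F.probes) (hR : R ∈ G.rects) (hS : S ∈ (F.nest G).rects)
    (h : (P.box.embed R).Overlaps S) : ∃ S₀ ∈ G.rects, P.box.embed S₀ = S := by
  rcases mem_nest_rects.1 hS with hS | ⟨P', hP', S₀, hS₀, rfl⟩
  · exact absurd h (hF.not_overlaps_of_enclosed hP (hG.embed_enclosed hR) hS)
  rcases eq_or_ne P P' with rfl | hne
  · exact ⟨S₀, hS₀, rfl⟩
  · exact absurd h.meets ((hF.columnsDisjoint P hP P' hP' hne).not_meets
      (hG.embed_enclosed hR).inColumn (hG.embed_enclosed hS₀).inColumn)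

theorem Admissible.nest_triangleFree (hF : F.Admissible C) (hG : G.Admissible window) :
    TriangleFree (F.nest G).rects := by
  intro R hR S hS T hT hRS hRT hST
  rcases mem_nest_rects.1 hR with hR₀ | ⟨P, hP, R₀, hR₀, rfl⟩
  · exact hF.triangleFree R hR₀ S (hF.mem_rects_of_overlaps hG hR₀ hS hRS)
      T (hF.mem_rects_of_overlaps hG hR₀ hT hRT) hRS hRT hST
  · obtain ⟨S₀, hS₀, rfl⟩ := hF.exists_eq_embed_of_overlaps hG hP hR₀ hS hRS
    obtain ⟨T₀, hT₀, rfl⟩ := hF.exists_eq_embed_of_overlaps hG hP hR₀ hT hRT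
    exact hG.triangleFree R₀ hR₀ S₀ hS₀ T₀ hT₀ ((Rect.overlaps_map_iff _ _).1 hRS)
      ((Rect.overlaps_map_iff _ _).1 hRT) ((Rect.overlaps_map_iff _ _).1 hST)

theorem Admissible.nest_avoids (hF : F.Admissible C) (hG : G.Admissible window)
    (hP : P ∈ F.probes) (hQ : Q ∈ G.probes) (hR : R ∈ (F.nest G).rects)
    (hRπ : R ∉ (P.nest Q).crossing) : R.Avoids (P.nest Q).box := by
  have hQP : Enclosed (P.box.embed Q.box) P.box := Rect.enclosed_embed (hG.box_enclosed Q hQ)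
  rcases mem_nest_rects.1 hR with hR | ⟨P', hP', S, hS, rfl⟩
  · exact (hF.avoids P hP R hR fun h => hRπ (mem_union_left _ h)).mono hQP
  rcases eq_or_ne P' P with rfl | hne
  · exact (Rect.avoids_map_iff _ _).2
      (hG.avoids Q hQ S hS fun h => hRπ (mem_union_right _ (mem_image_of_mem _ h)))
  · exact ((hF.columnsDisjoint P' hP' P hP hne).mono
      (hG.embed_enclosed hS).inColumn hQP.inColumn).avoids

theorem Admissible.nest_columnsDisjoint (hF : F.Admissible C) (hG : G.Admissible window)
    (hP : P ∈ F.probes) (hQ : Q ∈ G.probes) (hP' : P' ∈ F.probes) (hQ' : Q' ∈ G.probes)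
    (hne : P.nest Q ≠ P'.nest Q') : (P.nest Q).box.ColumnsDisjoint (P'.nest Q').box := by
  rcases eq_or_ne P P' with rfl | hPP
  · have hQQ : Q ≠ Q' := by rintro rfl; exact hne rfl
    exact (Rect.columnsDisjoint_map_iff _ _).2 (hG.columnsDisjoint Q hQ Q' hQ' hQQ)
  · exact (hF.columnsDisjoint P hP P' hP' hPP).mono
      (Rect.enclosed_embed (hG.box_enclosed Q hQ)).inColumn
      (Rect.enclosed_embed (hG.box_enclosed Q' hQ')).inColumn

theorem Admissible.nest_crossing_not_overlaps (hF : F.Admissible C) (hG : G.Admissible window)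
    (hP : P ∈ F.probes) (hQ : Q ∈ G.probes) (hR : R ∈ (P.nest Q).crossing)
    (hS : S ∈ (P.nest Q).crossing) : ¬ R.Overlaps S := by
  have outer_inner :
      ∀ R ∈ P.crossing, ∀ S₀ ∈ Q.crossing, ¬ (P.box.embed S₀).Overlaps R :=
    fun R hR S₀ hS₀ => hF.not_overlaps_of_enclosed hP
      (hG.embed_enclosed (hG.crossing_subset Q hQ hS₀)) (hF.crossing_subset P hP hR)
  rcases mem_union.1 hR with hR | hR <;> rcases mem_union.1 hS with hS | hS
  · exact hF.crossing_not_overlaps P hP R hR S hS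
  · obtain ⟨S₀, hS₀, rfl⟩ := mem_image.1 hS
    exact fun h => outer_inner R hR S₀ hS₀ h.symm
  · obtain ⟨R₀, hR₀, rfl⟩ := mem_image.1 hR
    exact outer_inner S hS R₀ hR₀
  · obtain ⟨R₀, hR₀, rfl⟩ := mem_image.1 hR
    obtain ⟨S₀, hS₀, rfl⟩ := mem_image.1 hS
    exact (Rect.overlaps_map_iff _ _).not.2 (hG.crossing_not_overlaps Q hQ R₀ hR₀ S₀ hS₀)

theorem Admissible.nest (hF : F.Admissible C) (hG : G.Admissible window) :
    (F.nest G).Admissible C where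
  rect_enclosed R hR := by
    rcases mem_nest_rects.1 hR with hR | ⟨P, hP, S, hS, rfl⟩
    · exact hF.rect_enclosed R hR
    · exact (hG.embed_enclosed hS).trans (hF.box_enclosed P hP)
  box_enclosed π hπ := by
    obtain ⟨P, hP, Q, hQ, rfl⟩ := mem_nest_probes.1 hπ
    exact (Rect.enclosed_embed (hG.box_enclosed Q hQ)).trans (hF.box_enclosed P hP)
  crossing_subset π hπ := by
    obtain ⟨P, hP, Q, hQ, rfl⟩ := mem_nest_probes.1 hπ
    refine union_subset ((hF.crossing_subset P hP).trans subset_union_left) fun R hR => ?_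
    obtain ⟨S, hS, rfl⟩ := mem_image.1 hR
    exact embed_mem_nest hP (hG.crossing_subset Q hQ hS)
  crosses π hπ R hR := by
    obtain ⟨P, hP, Q, hQ, rfl⟩ := mem_nest_probes.1 hπ
    rcases mem_union.1 hR with hR | hR
    · exact (hF.crosses P hP R hR).mono (Rect.enclosed_embed (hG.box_enclosed Q hQ))
    · obtain ⟨S, hS, rfl⟩ := mem_image.1 hR
      exact (Rect.crosses_map_iff _ _).2 (hG.crosses Q hQ S hS)
  avoids π hπ R hR hRπ := by
    obtain ⟨P, hP, Q, hQ, rfl⟩ := mem_nest_probes.1 hπ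
    exact hF.nest_avoids hG hP hQ hR hRπ
  columnsDisjoint π hπ π' hπ' hne := by
    obtain ⟨P, hP, Q, hQ, rfl⟩ := mem_nest_probes.1 hπ
    obtain ⟨P', hP', Q', hQ', rfl⟩ := mem_nest_probes.1 hπ'
    exact hF.nest_columnsDisjoint hG hP hQ hP' hQ' hne
  crossing_not_overlaps π hπ R hR S hS := by
    obtain ⟨P, hP, Q, hQ, rfl⟩ := mem_nest_probes.1 hπ
    exact hF.nest_crossing_not_overlaps hG hP hQ hR hS
  triangleFree := hF.nest_triangleFree hG

theorem Forces.nest (hF : F.Forces k) (hG : G.ForcesNewColour k) : (F.nest G).Forces (k + 1) := by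
  intro φ hφ
  obtain ⟨P, hP, hPk⟩ := hF φ (hφ.mono subset_union_left)
  have hψ : IsProperColouring G.rects (φ ∘ P.box.embed) := fun R hR S hS hRS =>
    hφ _ (embed_mem_nest hP hR) _ (embed_mem_nest hP hS) ((Rect.overlaps_map_iff _ _).2 hRS)
  obtain ⟨Q, hQ, hQk⟩ := hG _ hψ _ hPk
  refine ⟨P.nest Q, mem_nest_probes.2 ⟨P, hP, Q, hQ, rfl⟩, ?_⟩
  show k + 1 ≤ ((P.crossing ∪ Q.crossing.image P.box.embed).image φ).card
  rwa [Finset.image_union, Finset.image_image]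

theorem card_augment_rects_le : F.augment.rects.card ≤ F.rects.card + F.probes.card :=
  (Finset.card_union_le _ _).trans (Nat.add_le_add_left card_image_le _)

theorem card_augment_probes_le : F.augment.probes.card ≤ F.probes.card * 2 :=
  card_biUnion_le_card_mul _ _ _ fun _ _ => card_le_two

theorem card_nest_rects_le :
    (F.nest G).rects.card ≤ F.rects.card + F.probes.card * G.rects.card :=
  (Finset.card_union_le _ _).trans
    (Nat.add_le_add_left (card_biUnion_le_card_mul _ _ _ fun _ _ => card_image_le) _)

theorem card_nest_probes_le : (F.nest G).probes.card ≤ F.probes.card * G.probes.card :=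
  card_biUnion_le_card_mul _ _ _ fun _ _ => card_image_le

end Family

noncomputable def base : Family :=
  ⟨∅, {⟨⟨1 / 3, 2 / 3, 1 / 3, 2 / 3, by norm_num, by norm_num⟩, ∅⟩}⟩

noncomputable def family : ℕ → Family
  | 0 => base
  | n + 1 => (family n).nest (family n).augment

theorem admissible_family (n : ℕ) : (family n).Admissible unitSquare := by
  induction n with
  | zero => constructor <;> norm_num [family, base, TriangleFree, Enclosed, unitSquare]
  | succ n ih => exact ih.nest ih.augment

theorem forces_family (n : ℕ) : (family n).Forces n := by
  induction n with
  | zero => exact fun _ _ => ⟨_, mem_singleton_self _, Nat.zero_le _⟩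
  | succ n ih => exact ih.nest ((admissible_family n).forcesNewColour_augment ih)

theorem card_family_le (n : ℕ) :
    (family n).rects.card ≤ 2 ^ 4 ^ n ∧ (family n).probes.card ≤ 2 ^ 4 ^ n := by
  induction n with
  | zero => simp [family, base]
  | succ n ih =>
    obtain ⟨hr, hp⟩ := ih
    set N := 2 ^ 4 ^ n
    have hN : 2 ≤ N := Nat.le_self_pow (by positivity) 2
    have hN4 : 2 ^ 4 ^ (n + 1) = N ^ 4 := by rw [pow_succ, pow_mul]
    have hr' := Family.card_augment_rects_le (F := family n)
    have hp' := Family.card_augment_probes_le (F := family n)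
    have hN4' : 4 * N ^ 2 ≤ N ^ 4 := by
      rw [show N ^ 4 = N ^ 2 * N ^ 2 by ring]
      exact Nat.mul_le_mul_right _ (by nlinarith)
    rw [hN4]
    constructor
    · calc (family (n + 1)).rects.card
          ≤ (family n).rects.card + (family n).probes.card * (family n).augment.rects.card :=
            Family.card_nest_rects_le
        _ ≤ N + N * (N + N) := by gcongr; omega
        _ ≤ 4 * N ^ 2 := by nlinarith
        _ ≤ N ^ 4 := hN4'
    · calc (family (n + 1)).probes.card
          ≤ (family n).probes.card * (family n).augment.probes.card :=
            Family.card_nest_probes_le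
        _ ≤ N * (N * 2) := by gcongr; omega
        _ ≤ 4 * N ^ 2 := by nlinarith
        _ ≤ N ^ 4 := hN4'

theorem cliqueFree_three_overlapGraph {s : Finset Rect} (h : TriangleFree s) :
    (overlapGraph s).CliqueFree 3 := by
  intro t ht
  obtain ⟨a, b, c, hab, hac, hbc, -⟩ := SimpleGraph.is3Clique_iff.1 ht
  exact h a a.2 b b.2 c c.2 (overlapGraph_adj.1 hab) (overlapGraph_adj.1 hac)
    (overlapGraph_adj.1 hbc)

theorem Family.Forces.le_chromaticNumber {F : Family} {k : ℕ} (h : F.Forces k)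
    (hsub : ∀ P ∈ F.probes, P.crossing ⊆ F.rects) :
    (k : ℕ∞) ≤ (overlapGraph F.rects).chromaticNumber := by
  refine SimpleGraph.le_chromaticNumber_iff_coloring.2 fun m c => ?_
  let φ : Rect → ℕ := fun R => if hR : R ∈ F.rects then c ⟨R, hR⟩ else 0
  have hφ : IsProperColouring F.rects φ := fun R hR S hS hRS => by
    simp only [φ, dif_pos hR, dif_pos hS]
    exact fun h => c.valid (overlapGraph_adj.2 hRS) (Fin.val_injective h)
  obtain ⟨P, hP, hPk⟩ := h φ hφ
  have hrange : P.crossing.image φ ⊆ range m := fun x hx => by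
    obtain ⟨R, hR, rfl⟩ := mem_image.1 hx
    simp only [φ, dif_pos (hsub P hP hR), Finset.mem_range, Fin.is_lt]
  exact_mod_cast hPk.trans ((Finset.card_le_card hrange).trans (card_range m).le)

end Burling

theorem stmt2_general (k : ℕ) :
    ∃ R : Finset Rect, (overlapGraph R).CliqueFree 3 ∧ R.card ≤ 2 ^ 2 ^ (2 * k) ∧
      (k : ℕ∞) ≤ (overlapGraph R).chromaticNumber := by
  have hF := Burling.admissible_family k
  refine ⟨(Burling.family k).rects, Burling.cliqueFree_three_overlapGraph hF.triangleFree, ?_,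
    (Burling.forces_family k).le_chromaticNumber hF.crossing_subset⟩
  rw [pow_mul]
  exact (Burling.card_family_le k).1

/-- For every `k ≥ 1` there is a family of at most `2 ^ 2 ^ (2 * k)` rectangles whose
overlap graph is triangle-free and has chromatic number at least `k`. -/
theorem stmt2 (k : ℕ) (hk : 1 ≤ k) :
    ∃ R : Finset Rect, (overlapGraph R).CliqueFree 3 ∧ R.card ≤ 2 ^ 2 ^ (2 * k) ∧
      (k : ℕ∞) ≤ (overlapGraph R).chromaticNumber :=
  stmt2_general k
end

section
/- Let 𝔉 be a finite, clean, directed family of frames in general position. Then the intersection graph of 𝔉 is an overlap game graph: there exist a rooted forest M with vertex set 𝔉 and a representation μ assigning to each frame a nondegenerate closed interval of ℝ with all endpoints pairwise distinct, such that conditions (G1), (G2), (G3) hold for the intersection graph of 𝔉. -/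
open Set

/-- Closed intervals `[a, b]` and `[c, d]` overlap. -/
def IntervalOverlap (a b c d : ℝ) : Prop :=
  (a < c ∧ c < b ∧ b < d) ∨ (c < a ∧ a < d ∧ d < b)

/-- A rooted forest on the vertex set `V`, given by a parent function with no cycles. -/
structure RootedForest (V : Type) where
  parent : V → Option V
  acyclic : ∀ v, ¬ Relation.TransGen (fun x y => parent y = some x) v v

/-- `M.anc x y` means `x ≠ y` and `x` is an ancestor of `y` in `M` (written `x ≺ y`). -/
def RootedForest.anc {V : Type} (M : RootedForest V) : V → V → Prop :=
  Relation.TransGen (fun x y => M.parent y = some x)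

/-- `G` is an overlap game graph with meta-forest `M` and representation `v ↦ [μl v, μr v]`. -/
structure IsOGG {V : Type} (G : SimpleGraph V) (M : RootedForest V) (μl μr : V → ℝ) : Prop where
  nondeg : ∀ v, μl v < μr v
  endpoints_lr : ∀ v w, μl v ≠ μr w
  endpoints_l : ∀ v w, v ≠ w → μl v ≠ μl w
  endpoints_r : ∀ v w, v ≠ w → μr v ≠ μr w
  g1 : ∀ x y, M.anc x y → μl x < μl y
  g2 : ∀ x y, G.Adj x y ↔
    (M.anc x y ∨ M.anc y x) ∧ IntervalOverlap (μl x) (μr x) (μl y) (μr y)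
  g3 : ¬ ∃ x y z, M.anc x y ∧ M.anc y z ∧
    IntervalOverlap (μl x) (μr x) (μl y) (μr y) ∧
    Set.Icc (μl z) (μr z) ⊆ Set.Icc (μl x) (μr x) ∩ Set.Icc (μl y) (μr y)

/-- A vertex is secondary if its interval is contained in the interval of its parent. -/
def Secondary {V : Type} (M : RootedForest V) (μl μr : V → ℝ) (v : V) : Prop :=
  ∃ u, M.parent v = some u ∧ Set.Icc (μl v) (μr v) ⊆ Set.Icc (μl u) (μr u)

def Primary {V : Type} (M : RootedForest V) (μl μr : V → ℝ) (v : V) : Prop :=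
  ¬ Secondary M μl μr v

/-- `P(u)`: the set of vertices `v` such that `u` is the first primary vertex on the
path in `M` from `v` towards the root (including `u` itself). -/
def Pset {V : Type} (M : RootedForest V) (μl μr : V → ℝ) (u : V) : Set V :=
  {v | (u = v ∨ M.anc u v) ∧
    ∀ w, (w = v ∨ M.anc w v) → M.anc u w → Secondary M μl μr w}

def IsLeaf {V : Type} (M : RootedForest V) (v : V) : Prop := ∀ w, M.parent w ≠ some v

/-- `P` is the vertex set of a root-to-leaf path of `M`. -/
def RootToLeafPath {V : Type} (M : RootedForest V) (P : Set V) : Prop :=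
  ∃ v, IsLeaf M v ∧ P = {w | w = v ∨ M.anc w v}

/-- The number of vertices of the subtree of `M` rooted at `v`. -/
noncomputable def subtreeSize {V : Type} (M : RootedForest V) (v : V) : ℕ :=
  Nat.card {w : V // w = v ∨ M.anc v w}

/-- `s` assigns to each non-leaf vertex a child whose subtree is largest. -/
def IsHeavyChildFun {V : Type} (M : RootedForest V) (s : V → V) : Prop :=
  ∀ u : V, (∃ w, M.parent w = some u) →
    M.parent (s u) = some u ∧ ∀ w, M.parent w = some u → subtreeSize M w ≤ subtreeSize M (s u)

/-- A heavy edge from `x` to its child `y = s x`. -/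
def HeavyStep {V : Type} (M : RootedForest V) (s : V → V) (x y : V) : Prop :=
  M.parent y = some x ∧ y = s x

/-- `x` and `y` lie on the same heavy path of the heavy-light decomposition given by `s`. -/
def SameHeavyPath {V : Type} (M : RootedForest V) (s : V → V) (x y : V) : Prop :=
  Relation.EqvGen (HeavyStep M s) x y

/-!
Reflecting the plane in a vertical line and transposing it map the four kinds of directed
families to rightward-directed ones, and such maps preserve frames meeting and enclosure, so it
suffices to treat a rightward-directed family. There each frame is represented by its horizontal
projection `[ℓ, r]`. Call `v` a predecessor of `w` if `v` meets `w` rightward or encloses `w`;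
the parent of `w` is its predecessor with the largest `ℓ`. Two predecessors of `w` both contain
the lower-left corner of `w`, so their frames meet unless one encloses the other; hence the
predecessors of `w` form a chain and all of them are ancestors of `w`. Along an ancestor chain
`ℓ` and `b` increase and `t` decreases, so for an ancestor pair, overlap of the projections is
exactly a rightward intersection; this gives (G1) and (G2), and (G3) is cleanliness.
-/

lemma endpoint_mem_Icc_or_lt_lt {a b c d : ℝ} (hcb : c ≤ b) (had : a ≤ d) :
    (({c, d} : Set ℝ) ∩ Icc a b).Nonempty ∨ c < a ∧ b < d := by
  rcases le_or_gt a c with hac | hca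
  · exact Or.inl ⟨c, Or.inl rfl, hac, hcb⟩
  rcases le_or_gt d b with hdb | hbd
  · exact Or.inl ⟨d, Or.inr rfl, had, hdb⟩
  · exact Or.inr ⟨hca, hbd⟩

lemma intervalOverlap_comm {a b c d : ℝ} : IntervalOverlap a b c d ↔ IntervalOverlap c d a b :=
  Or.comm

lemma List.Pairwise.neg_swap {a b c d : ℝ} (h : [a, b, c, d].Pairwise (· ≠ ·)) :
    [-b, -a, -d, -c].Pairwise (· ≠ ·) := by
  simp only [List.pairwise_cons, List.mem_cons, List.not_mem_nil, or_false, forall_eq_or_imp,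
    forall_eq, ne_eq, neg_inj, List.Pairwise.nil] at h ⊢
  tauto

namespace Rect

lemma frame_eq_s5 (F : Rect) :
    F.frame = Icc F.l F.r ×ˢ {F.b, F.t} ∪ {F.l, F.r} ×ˢ Icc F.b F.t := by
  rw [frame, toSet, frontier_prod_eq, closure_Icc, closure_Icc, frontier_Icc F.hlr.le,
    frontier_Icc F.hbt.le]

lemma frame_inter_nonempty_of_crossing {F F' : Rect} {x y : ℝ}
    (hx : x ∈ ({F'.l, F'.r} : Set ℝ) ∩ Icc F.l F.r)
    (hy : y ∈ ({F.b, F.t} : Set ℝ) ∩ Icc F'.b F'.t) :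
    (F.frame ∩ F'.frame).Nonempty :=
  ⟨(x, y), by rw [frame_eq_s5]; exact Or.inl ⟨hx.2, hy.1⟩,
    by rw [frame_eq_s5]; exact Or.inr ⟨hx.1, hy.2⟩⟩

lemma frame_inter_nonempty_of_mem_toSet {F F' : Rect} {p : ℝ × ℝ} (hp : p ∈ F.toSet)
    (hp' : p ∈ F'.toSet) (h : ¬Enclosed F F') (h' : ¬Enclosed F' F) :
    (F.frame ∩ F'.frame).Nonempty := by
  obtain ⟨⟨hx₁, hx₂⟩, hy₁, hy₂⟩ := hp
  obtain ⟨⟨hx₁', hx₂'⟩, hy₁', hy₂'⟩ := hp'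
  have cross' : ∀ {x y : ℝ}, x ∈ ({F.l, F.r} : Set ℝ) ∩ Icc F'.l F'.r →
      y ∈ ({F'.b, F'.t} : Set ℝ) ∩ Icc F.b F.t → (F.frame ∩ F'.frame).Nonempty :=
    fun hx hy => inter_comm F'.frame F.frame ▸ frame_inter_nonempty_of_crossing hx hy
  -- On each axis, an endpoint of one interval lies in the other, or one interval lies strictly
  -- inside the other; strict containment on both axes is an enclosure.
  rcases endpoint_mem_Icc_or_lt_lt (a := F.l) (b := F.r) (c := F'.l) (d := F'.r)
    (by linarith) (by linarith) with ⟨x, hx⟩ | ⟨hI₁, hI₂⟩ <;>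
  rcases endpoint_mem_Icc_or_lt_lt (a := F'.l) (b := F'.r) (c := F.l) (d := F.r)
    (by linarith) (by linarith) with ⟨x', hx'⟩ | ⟨hI₁', hI₂'⟩ <;>
  rcases endpoint_mem_Icc_or_lt_lt (a := F'.b) (b := F'.t) (c := F.b) (d := F.t)
    (by linarith) (by linarith) with ⟨y, hy⟩ | ⟨hJ₁, hJ₂⟩ <;>
  rcases endpoint_mem_Icc_or_lt_lt (a := F.b) (b := F.t) (c := F'.b) (d := F'.t)
    (by linarith) (by linarith) with ⟨y', hy'⟩ | ⟨hJ₁', hJ₂'⟩ <;>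
  first
    | exact frame_inter_nonempty_of_crossing hx hy
    | exact cross' hx' hy'
    | exact absurd ⟨‹_›, ‹_›, ‹_›, ‹_›⟩ h
    | exact absurd ⟨‹_›, ‹_›, ‹_›, ‹_›⟩ h'
    | linarith

lemma enclosed_iff_subset_interior {F F' : Rect} :
    Enclosed F F' ↔ F.toSet ⊆ interior F'.toSet := by
  rw [toSet, toSet, interior_prod_eq, interior_Icc, interior_Icc, prod_subset_prod_iff,
    Icc_subset_Ioo_iff F.hlr.le, Icc_subset_Ioo_iff F.hbt.le, Enclosed]
  simp only [Icc_eq_empty_iff, F.hlr.le, F.hbt.le, not_true_eq_false, or_false, and_assoc]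

section Homeomorphism

variable (e : ℝ × ℝ ≃ₜ ℝ × ℝ) {F F' G G' : Rect}

lemma frame_inter_nonempty_iff_of_toSet_eq_image (hG : G.toSet = e '' F.toSet)
    (hG' : G'.toSet = e '' F'.toSet) :
    (G.frame ∩ G'.frame).Nonempty ↔ (F.frame ∩ F'.frame).Nonempty := by
  rw [frame, frame, hG, hG', ← e.image_frontier, ← e.image_frontier,
    ← image_inter e.injective, image_nonempty, frame, frame]

lemma enclosed_iff_of_toSet_eq_image (hG : G.toSet = e '' F.toSet)
    (hG' : G'.toSet = e '' F'.toSet) : Enclosed G G' ↔ Enclosed F F' := by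
  rw [enclosed_iff_subset_interior, enclosed_iff_subset_interior, hG, hG', ← e.image_interior,
    image_subset_image_iff e.injective]

end Homeomorphism

def reflect (F : Rect) : Rect := ⟨-F.r, -F.l, F.b, F.t, neg_lt_neg F.hlr, F.hbt⟩

def transpose (F : Rect) : Rect := ⟨F.b, F.t, F.l, F.r, F.hbt, F.hlr⟩

lemma toSet_reflect (F : Rect) :
    F.reflect.toSet = (Homeomorph.neg ℝ).prodCongr (Homeomorph.refl ℝ) '' F.toSet := by
  rw [Homeomorph.coe_prodCongr, toSet, toSet, prodMap_image_prod, Homeomorph.coe_neg,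
    image_neg_Icc]
  exact congrArg (Icc (-F.r) (-F.l) ×ˢ ·) (image_id _).symm

lemma toSet_transpose (F : Rect) : F.transpose.toSet = Homeomorph.prodComm ℝ ℝ '' F.toSet := by
  rw [Homeomorph.coe_prodComm, toSet, toSet, image_swap_prod]
  rfl

lemma rightDir_reflect_iff {F F' : Rect} : RightDir F.reflect F'.reflect ↔ LeftDir F F' := by
  simp only [RightDir, LeftDir, reflect, neg_lt_neg_iff]
  tauto

lemma rightDir_transpose_iff {F F' : Rect} : RightDir F.transpose F'.transpose ↔ UpDir F F' :=
  Iff.rfl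

lemma leftDir_transpose_iff {F F' : Rect} : LeftDir F.transpose F'.transpose ↔ DownDir F F' :=
  Iff.rfl

end Rect

lemma RightDir.frame_inter_nonempty {F F' : Rect} (h : RightDir F F') :
    (F.frame ∩ F'.frame).Nonempty :=
  inter_comm F'.frame F.frame ▸ Rect.frame_inter_nonempty_of_crossing (x := F.r) (y := F'.b)
    ⟨Or.inr rfl, h.2.1.le, h.2.2.1.le⟩
    ⟨Or.inl rfl, h.2.2.2.1.le, (h.2.2.2.2.1.trans h.2.2.2.2.2).le⟩

lemma IntersectingPairsSatisfy.mono {𝔉 : Finset Rect} {P Q : Rect → Rect → Prop}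
    (h : IntersectingPairsSatisfy 𝔉 P) (hPQ : ∀ F F', P F F' → Q F F') :
    IntersectingPairsSatisfy 𝔉 Q := fun F hF F' hF' hne hm =>
  (h F hF F' hF' hne hm).imp (hPQ F F') (hPQ F' F)

section Rightward

variable {V : Type} (R : V → Rect)

def Precedes (v w : V) : Prop := RightDir (R v) (R w) ∨ Enclosed (R w) (R v)

lemma exists_precedes_max [Finite V] {w : V} (h : ∃ v, Precedes R v w) :
    ∃ v, Precedes R v w ∧ ∀ u, Precedes R u w → (R u).l ≤ (R v).l := by
  obtain ⟨v, hv, hmax⟩ :=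
    exists_max_image {v | Precedes R v w} (fun v => (R v).l) (toFinite _) h
  exact ⟨v, hv, hmax⟩

open Classical in
noncomputable def lastPredecessor [Finite V] (w : V) : Option V :=
  if h : ∃ v, Precedes R v w then some (exists_precedes_max R h).choose else none

variable {R}

lemma Precedes.bounds {v w : V} (h : Precedes R v w) :
    (R v).l < (R w).l ∧ (R w).l < (R v).r ∧ (R v).b < (R w).b ∧ (R w).t < (R v).t := by
  rcases h with ⟨h₁, h₂, -, h₃, -, h₄⟩ | ⟨h₁, h₂, h₃, h₄⟩
  · exact ⟨h₁, h₂, h₃, h₄⟩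
  · exact ⟨h₁, (R w).hlr.trans h₂, h₃, h₄⟩

lemma Precedes.precedes_of_lt
    (hdir : ∀ v w, v ≠ w → ((R v).frame ∩ (R w).frame).Nonempty →
      RightDir (R v) (R w) ∨ RightDir (R w) (R v))
    {u v w : V} (hu : Precedes R u w) (hv : Precedes R v w) (hl : (R u).l < (R v).l) :
    Precedes R u v := by
  by_cases hvu : Enclosed (R v) (R u)
  · exact Or.inr hvu
  obtain ⟨hu₁, hu₂, hu₃, hu₄⟩ := hu.bounds
  obtain ⟨hv₁, hv₂, hv₃, hv₄⟩ := hv.bounds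
  have hmeet : ((R u).frame ∩ (R v).frame).Nonempty :=
    Rect.frame_inter_nonempty_of_mem_toSet (p := ((R w).l, (R w).b))
      ⟨⟨hu₁.le, hu₂.le⟩, hu₃.le, ((R w).hbt.trans hu₄).le⟩
      ⟨⟨hv₁.le, hv₂.le⟩, hv₃.le, ((R w).hbt.trans hv₄).le⟩
      (fun h => lt_irrefl _ (hl.trans h.1)) hvu
  have huv : u ≠ v := by rintro rfl; exact lt_irrefl _ hl
  rcases hdir u v huv hmeet with h | h
  · exact Or.inl h
  · exact absurd h.1 hl.not_gt

lemma lastPredecessor_eq_some [Finite V] {v w : V} (h : lastPredecessor R w = some v) :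
    Precedes R v w ∧ ∀ u, Precedes R u w → (R u).l ≤ (R v).l := by
  unfold lastPredecessor at h
  split_ifs at h with hw
  cases h
  exact (exists_precedes_max R hw).choose_spec

lemma exists_lastPredecessor_eq_some [Finite V] {u w : V} (h : Precedes R u w) :
    ∃ v, lastPredecessor R w = some v := by
  rw [lastPredecessor, dif_pos ⟨u, h⟩]
  exact ⟨_, rfl⟩

lemma bounds_of_transGen_lastPredecessor [Finite V] {v w : V}
    (h : Relation.TransGen (fun x y => lastPredecessor R y = some x) v w) :
    (R v).l < (R w).l ∧ (R v).b < (R w).b ∧ (R w).t < (R v).t := by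
  induction h with
  | single h =>
    obtain ⟨h₁, -, h₂, h₃⟩ := (lastPredecessor_eq_some h).1.bounds
    exact ⟨h₁, h₂, h₃⟩
  | tail _ h ih =>
    obtain ⟨h₁, -, h₂, h₃⟩ := (lastPredecessor_eq_some h).1.bounds
    exact ⟨ih.1.trans h₁, ih.2.1.trans h₂, h₃.trans ih.2.2⟩

variable (R) in
noncomputable def precedenceForest [Finite V] : RootedForest V where
  parent := lastPredecessor R
  acyclic _ h := lt_irrefl _ (bounds_of_transGen_lastPredecessor h).1

lemma Precedes.anc [Finite V] (hl : Function.Injective fun v => (R v).l)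
    (hdir : ∀ v w, v ≠ w → ((R v).frame ∩ (R w).frame).Nonempty →
      RightDir (R v) (R w) ∨ RightDir (R w) (R v))
    {u w : V} (h : Precedes R u w) : (precedenceForest R).anc u w := by
  induction w using (Finite.wellFounded_of_trans_of_irrefl
    (InvImage (· < ·) fun v => (R v).l)).induction generalizing u with
  | _ w ih =>
  obtain ⟨v, hv⟩ := exists_lastPredecessor_eq_some h
  obtain ⟨hvw, hmax⟩ := lastPredecessor_eq_some hv
  rcases eq_or_ne u v with rfl | huv
  · exact .single hv
  · have hlt : (R u).l < (R v).l := (hmax u h).lt_of_ne (hl.ne huv)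
    exact (ih v hvw.bounds.1 (h.precedes_of_lt hdir hvw hlt)).tail hv

lemma rightDir_iff_intervalOverlap_of_anc [Finite V] {x y : V}
    (h : (precedenceForest R).anc x y) :
    RightDir (R x) (R y) ↔ IntervalOverlap (R x).l (R x).r (R y).l (R y).r := by
  obtain ⟨hl, hb, ht⟩ := bounds_of_transGen_lastPredecessor h
  constructor
  · rintro ⟨h₁, h₂, h₃, -⟩
    exact Or.inl ⟨h₁, h₂, h₃⟩
  · rintro (⟨h₁, h₂, h₃⟩ | ⟨h₁, -⟩)
    · exact ⟨h₁, h₂, h₃, hb, (R y).hbt, ht⟩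
    · exact absurd h₁ hl.not_gt

theorem isOGG_precedenceForest [Finite V] (G : SimpleGraph V)
    (hadj : ∀ v w, G.Adj v w ↔ v ≠ w ∧ ((R v).frame ∩ (R w).frame).Nonempty)
    (hgp : ∀ v w, v ≠ w → [(R v).l, (R v).r, (R w).l, (R w).r].Pairwise (· ≠ ·))
    (hdir : ∀ v w, v ≠ w → ((R v).frame ∩ (R w).frame).Nonempty →
      RightDir (R v) (R w) ∨ RightDir (R w) (R v))
    (hclean : ∀ u v w, u ≠ v → ((R u).frame ∩ (R v).frame).Nonempty →
      Enclosed (R w) (R u) → ¬Enclosed (R w) (R v)) :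
    IsOGG G (precedenceForest R) (fun v => (R v).l) (fun v => (R v).r) := by
  have hsep : ∀ v w, v ≠ w →
      (R v).l ≠ (R w).l ∧ (R v).r ≠ (R w).r ∧ (R v).l ≠ (R w).r := fun v w h => by
    have := hgp v w h
    simp only [List.pairwise_cons, List.mem_cons, List.not_mem_nil, or_false, forall_eq_or_imp,
      forall_eq] at this
    exact ⟨this.1.2.1, this.2.1.2, this.1.2.2⟩
  have hl : Function.Injective fun v => (R v).l := fun v w e =>
    by_contra fun h => (hsep v w h).1 e
  have adj_of_rightDir : ∀ {x y}, RightDir (R x) (R y) → G.Adj x y := fun {x y} h =>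
    (hadj x y).2 ⟨by rintro rfl; exact lt_irrefl _ h.1, h.frame_inter_nonempty⟩
  refine ⟨fun v => (R v).hlr, fun v w => ?_, fun v w h => (hsep v w h).1,
    fun v w h => (hsep v w h).2.1, fun x y h => (bounds_of_transGen_lastPredecessor h).1,
    fun x y => ⟨fun hxy => ?_, ?_⟩, ?_⟩
  · rcases eq_or_ne v w with rfl | h
    · exact (R v).hlr.ne
    · exact (hsep v w h).2.2
  · obtain ⟨hne, hm⟩ := (hadj x y).1 hxy
    rcases hdir x y hne hm with h | h
    · have hanc : (precedenceForest R).anc x y := Precedes.anc hl hdir (Or.inl h)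
      exact ⟨Or.inl hanc, (rightDir_iff_intervalOverlap_of_anc hanc).1 h⟩
    · have hanc : (precedenceForest R).anc y x := Precedes.anc hl hdir (Or.inl h)
      exact ⟨Or.inr hanc,
        intervalOverlap_comm.1 ((rightDir_iff_intervalOverlap_of_anc hanc).1 h)⟩
  · rintro ⟨hanc | hanc, hov⟩
    · exact adj_of_rightDir ((rightDir_iff_intervalOverlap_of_anc hanc).2 hov)
    · exact (adj_of_rightDir
        ((rightDir_iff_intervalOverlap_of_anc hanc).2 (intervalOverlap_comm.1 hov))).symm
  · rintro ⟨x, y, z, hxy, hyz, hov, hsub⟩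
    have hxy' := (rightDir_iff_intervalOverlap_of_anc hxy).2 hov
    obtain ⟨hlx, hbx, htx⟩ := bounds_of_transGen_lastPredecessor (hxy.trans hyz)
    obtain ⟨hly, hby, hty⟩ := bounds_of_transGen_lastPredecessor hyz
    have hzx : z ≠ x := by rintro rfl; exact lt_irrefl _ hlx
    have hrz : (R z).r < (R x).r :=
      (hsub ⟨(R z).hlr.le, le_rfl⟩).1.2.lt_of_ne (hsep z x hzx).2.1
    have hxy_ne : x ≠ y := by rintro rfl; exact lt_irrefl _ hxy'.1
    exact hclean x y z hxy_ne hxy'.frame_inter_nonempty ⟨hlx, hrz, hbx, htx⟩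
      ⟨hly, hrz.trans hxy'.2.2.1, hby, hty⟩

end Rightward

theorem exists_isOGG_frameGraph_of_toSet_eq_image (𝔉 : Finset Rect) (φ : Rect → Rect)
    (e : ℝ × ℝ ≃ₜ ℝ × ℝ) (he : ∀ F, (φ F).toSet = e '' F.toSet)
    (hgp : ∀ F ∈ 𝔉, ∀ F' ∈ 𝔉, F ≠ F' →
      [(φ F).l, (φ F).r, (φ F').l, (φ F').r].Pairwise (· ≠ ·))
    (hclean : Clean 𝔉)
    (hdir : IntersectingPairsSatisfy 𝔉 fun F F' => RightDir (φ F) (φ F')) :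
    ∃ (M : RootedForest {F : Rect // F ∈ 𝔉}) (μl μr : {F : Rect // F ∈ 𝔉} → ℝ),
      IsOGG (frameGraph 𝔉) M μl μr := by
  have hmeet (F F' : Rect) := Rect.frame_inter_nonempty_iff_of_toSet_eq_image e (he F) (he F')
  have henc (F F' : Rect) := Rect.enclosed_iff_of_toSet_eq_image e (he F) (he F')
  have hadj (v w : {F // F ∈ 𝔉}) :
      (frameGraph 𝔉).Adj v w ↔ v ≠ w ∧ ((φ v).frame ∩ (φ w).frame).Nonempty :=
    and_congr_right' (hmeet v w).symm
  have hgp' (v w : {F // F ∈ 𝔉}) (h : v ≠ w) :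
      [(φ v).l, (φ v).r, (φ w).l, (φ w).r].Pairwise (· ≠ ·) :=
    hgp v v.2 w w.2 (Subtype.coe_ne_coe.2 h)
  have hdir' (v w : {F // F ∈ 𝔉}) (h : v ≠ w)
      (hm : ((φ v).frame ∩ (φ w).frame).Nonempty) :
      RightDir (φ v) (φ w) ∨ RightDir (φ w) (φ v) :=
    hdir v v.2 w w.2 (Subtype.coe_ne_coe.2 h) ((hmeet v w).1 hm)
  have hclean' (u v w : {F // F ∈ 𝔉}) (huv : u ≠ v)
      (hm : ((φ u).frame ∩ (φ v).frame).Nonempty) (hu : Enclosed (φ w) (φ u)) :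
      ¬Enclosed (φ w) (φ v) := fun hv =>
    hclean ⟨u, u.2, v, v.2, w, w.2, Subtype.coe_ne_coe.2 huv, (hmeet u v).1 hm,
      (henc w u).1 hu, (henc w v).1 hv⟩
  exact ⟨_, _, _, isOGG_precedenceForest (R := fun F : {F // F ∈ 𝔉} => φ F.1) _
    hadj hgp' hdir' hclean'⟩

/-- The intersection graph of a finite, clean, directed family of frames in general
position is an overlap game graph. -/
theorem stmt5 (𝔉 : Finset Rect) (hgp : GenPos 𝔉) (hclean : Clean 𝔉)
    (hdir : IsDirectedFamily 𝔉) :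
    ∃ (M : RootedForest {F : Rect // F ∈ 𝔉}) (μl μr : {F : Rect // F ∈ 𝔉} → ℝ),
      IsOGG (frameGraph 𝔉) M μl μr := by
  rcases hdir with h | h | h | h
  · exact exists_isOGG_frameGraph_of_toSet_eq_image 𝔉 id (.refl _) (fun F => (image_id _).symm)
      (fun F hF F' hF' hne => (hgp F hF F' hF' hne).1) hclean h
  · exact exists_isOGG_frameGraph_of_toSet_eq_image 𝔉 Rect.reflect _ Rect.toSet_reflect
      (fun F hF F' hF' hne => (hgp F hF F' hF' hne).1.neg_swap) hclean
      (h.mono fun _ _ => Rect.rightDir_reflect_iff.2)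
  · exact exists_isOGG_frameGraph_of_toSet_eq_image 𝔉 Rect.transpose _ Rect.toSet_transpose
      (fun F hF F' hF' hne => (hgp F hF F' hF' hne).2) hclean
      (h.mono fun _ _ => Rect.rightDir_transpose_iff.2)
  · refine exists_isOGG_frameGraph_of_toSet_eq_image 𝔉 (Rect.reflect ∘ Rect.transpose)
      ((Homeomorph.prodComm ℝ ℝ).trans ((Homeomorph.neg ℝ).prodCongr (.refl ℝ)))
      (fun F => ?_)
      (fun F hF F' hF' hne => (hgp F hF F' hF' hne).2.neg_swap) hclean
      (h.mono fun _ _ hd => Rect.rightDir_reflect_iff.2 (Rect.leftDir_transpose_iff.2 hd))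
    rw [Function.comp_apply, Rect.toSet_reflect, Rect.toSet_transpose, image_image]
    rfl
end

section
/- Let G be a triangle-free overlap game graph with meta-forest M and representation μ, let S be a set of primary vertices of G that is independent in G, and let v ∈ S. Then there is at most one vertex u ∈ S such that u ≺ v and there exist x ∈ P(u) and y ∈ P(v) with x ≺ y and x adjacent to y in G. -/
section Aux

variable {V : Type} (M : RootedForest V)

lemma anc_ne {a b : V} (h : M.anc a b) : a ≠ b := by
  rintro rfl; exact M.acyclic a h

lemma rtg_comparable' {a b p : V}
    (hbp : Relation.ReflTransGen (fun x y => M.parent y = some x) b p) :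
    Relation.ReflTransGen (fun x y => M.parent y = some x) a p →
    Relation.ReflTransGen (fun x y => M.parent y = some x) a b ∨
      Relation.ReflTransGen (fun x y => M.parent y = some x) b a := by
  induction hbp with
  | refl => exact fun hap => Or.inl hap
  | @tail q p' hbq hqp ih =>
    intro hap
    rcases Relation.ReflTransGen.cases_tail hap with rfl | ⟨c, hac, hcp⟩
    · exact Or.inr (hbq.tail hqp)
    · obtain rfl : c = q := Option.some.inj (hcp.symm.trans hqp)
      exact ih hac

lemma anc_comparable {a b c : V} (hac : M.anc a c) (hbc : M.anc b c) :
    a = b ∨ M.anc a b ∨ M.anc b a := by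
  rcases rtg_comparable' M hbc.to_reflTransGen hac.to_reflTransGen with h | h
  · rcases Relation.reflTransGen_iff_eq_or_transGen.mp h with rfl | h
    · exact Or.inl rfl
    · exact Or.inr (Or.inl h)
  · rcases Relation.reflTransGen_iff_eq_or_transGen.mp h with rfl | h
    · exact Or.inl rfl
    · exact Or.inr (Or.inr h)

lemma Pset_subset {μl μr : V → ℝ} {u w : V} (hw : w ∈ Pset M μl μr u) :
    Set.Icc (μl w) (μr w) ⊆ Set.Icc (μl u) (μr u) := by
  obtain ⟨h1, h2⟩ := hw
  rcases h1 with rfl | h1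
  · exact subset_rfl
  · revert h2
    induction h1 with
    | @single b hpw =>
      intro h2
      obtain ⟨p, hp, hsub⟩ := h2 b (Or.inl rfl) (Relation.TransGen.single hpw)
      obtain rfl : p = u := Option.some.inj (hp.symm.trans hpw)
      exact hsub
    | @tail b c hup hstep ih =>
      intro h2
      obtain ⟨p, hp, hsub⟩ := h2 c (Or.inl rfl) (hup.tail hstep)
      obtain rfl : p = b := Option.some.inj (hp.symm.trans hstep)
      refine hsub.trans (ih ?_)
      intro t ht hut
      refine h2 t ?_ hut
      rcases ht with rfl | ht
      · exact Or.inr (Relation.TransGen.single hstep)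
      · exact Or.inr (ht.tail hstep)

lemma facts {G : SimpleGraph V} {μl μr : V → ℝ}
    (h : IsOGG G M μl μr) {u v x y : V}
    (huv : M.anc u v) (hvprim : Primary M μl μr v) (hnadj : ¬ G.Adj u v)
    (hx : x ∈ Pset M μl μr u) (hy : y ∈ Pset M μl μr v)
    (hxy : M.anc x y) (hadj : G.Adj x y) :
    M.anc x v ∧ G.Adj x v ∧ μl x < μl v ∧ μl v < μr x ∧ μr x < μr v ∧
      μl u ≤ μl x ∧ μr x ≤ μr u ∧ μr v < μr u := by
  obtain ⟨-, hov⟩ := (h.g2 x y).mp hadj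
  have hlxy := h.g1 x y hxy
  have hov' : μl x < μl y ∧ μl y < μr x ∧ μr x < μr y := by
    rcases hov with h' | h'
    · exact h'
    · exact absurd hlxy (not_lt.mpr h'.1.le)
  have hysub := Pset_subset M hy
  rw [Set.Icc_subset_Icc_iff (h.nondeg y).le] at hysub
  have hxsub := Pset_subset M hx
  rw [Set.Icc_subset_Icc_iff (h.nondeg x).le] at hxsub
  have hxv : M.anc x v := by
    rcases hy.1 with rfl | hvy
    · exact hxy
    · rcases anc_comparable M hxy hvy with rfl | hxv | hvx
      · exact absurd (hx.2 x (Or.inl rfl) huv) hvprim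
      · exact hxv
      · exact absurd (hx.2 v (Or.inr hvx) huv) hvprim
  have h1 : μl x < μl v := h.g1 x v hxv
  have h2 : μl v < μr x := lt_of_le_of_lt hysub.1 hov'.2.1
  have h3 : μr x < μr v := lt_of_lt_of_le hov'.2.2 hysub.2
  have hadjxv : G.Adj x v := (h.g2 x v).mpr ⟨Or.inl hxv, Or.inl ⟨h1, h2, h3⟩⟩
  have h4 : μr v < μr u := by
    rcases lt_trichotomy (μr v) (μr u) with hlt | heq | hgt
    · exact hlt
    · exact absurd heq.symm (h.endpoints_r u v (anc_ne M huv))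
    · exact absurd ((h.g2 u v).mpr ⟨Or.inl huv,
        Or.inl ⟨h.g1 u v huv, h2.trans_le hxsub.2, hgt⟩⟩) hnadj
  exact ⟨hxv, hadjxv, h1, h2, h3, hxsub.1, hxsub.2, h4⟩

lemma key {G : SimpleGraph V} {μl μr : V → ℝ}
    (h : IsOGG G M μl μr) (htf : G.CliqueFree 3)
    {S : Set V} (hprim : ∀ v ∈ S, Primary M μl μr v)
    (hind : ∀ a ∈ S, ∀ b ∈ S, ¬ G.Adj a b)
    {v u₁ u₂ : V} (hv : v ∈ S) (hu₁ : u₁ ∈ S) (hu₂ : u₂ ∈ S)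
    (h12 : M.anc u₁ u₂)
    (h1 : M.anc u₁ v ∧ ∃ x ∈ Pset M μl μr u₁, ∃ y ∈ Pset M μl μr v, M.anc x y ∧ G.Adj x y)
    (h2 : M.anc u₂ v ∧ ∃ x ∈ Pset M μl μr u₂, ∃ y ∈ Pset M μl μr v, M.anc x y ∧ G.Adj x y) :
    False := by
  classical
  obtain ⟨h1v, x₁, hx₁, y₁, hy₁, hxy₁, hadj₁⟩ := h1
  obtain ⟨h2v, x₂, hx₂, y₂, hy₂, hxy₂, hadj₂⟩ := h2
  obtain ⟨hx1v, hadj1v, a1, b1, c1, d1, e1, f1⟩ :=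
    facts M h h1v (hprim v hv) (hind u₁ hu₁ v hv) hx₁ hy₁ hxy₁ hadj₁
  obtain ⟨hx2v, hadj2v, a2, b2, c2, d2, e2, f2⟩ :=
    facts M h h2v (hprim v hv) (hind u₂ hu₂ v hv) hx₂ hy₂ hxy₂ hadj₂
  have hu2prim := hprim u₂ hu₂
  rcases anc_comparable M hx1v hx2v with rfl | hx12 | hx21
  · exact hu2prim (hx₁.2 u₂ hx₂.1 h12)
  · rcases hx₂.1 with rfl | hu2x2
    · exact hind _ hu₂ v hv hadj2v
    rcases lt_trichotomy (μr x₁) (μr x₂) with hr | hr | hr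
    · have hadj12 : G.Adj x₁ x₂ := (h.g2 x₁ x₂).mpr
        ⟨Or.inl hx12, Or.inl ⟨h.g1 x₁ x₂ hx12, a2.trans b1, hr⟩⟩
      exact htf {x₁, x₂, v} (SimpleGraph.is3Clique_triple_iff.mpr ⟨hadj12, hadj1v, hadj2v⟩)
    · exact h.endpoints_r x₁ x₂ (anc_ne M hx12) hr
    · rcases anc_comparable M hx12 hu2x2 with heq | hx1u2 | hu2x1
      · exact hu2prim (hx₁.2 u₂ (Or.inl heq.symm) h12)
      · refine h.g3 ⟨x₁, u₂, x₂, hx1u2, hu2x2, ?_, ?_⟩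
        · exact Or.inl ⟨h.g1 x₁ u₂ hx1u2, (h.g1 u₂ v h2v).trans b1, c1.trans f2⟩
        · exact Set.subset_inter
            (Set.Icc_subset_Icc (h.g1 x₁ x₂ hx12).le hr.le) (Pset_subset M hx₂)
      · exact hu2prim (hx₁.2 u₂ (Or.inr hu2x1) h12)
  · have hu2x1 : M.anc u₂ x₁ := by
      rcases hx₂.1 with rfl | hx
      · exact hx21
      · exact hx.trans hx21
    exact hu2prim (hx₁.2 u₂ (Or.inr hu2x1) h12)

end Aux

/-- In a triangle-free overlap game graph, for an independent set `S` of primary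
vertices and `v ∈ S`, there is at most one `u ∈ S` with `P(u) → P(v)`. -/
theorem stmt9 {V : Type} [Fintype V] (G : SimpleGraph V) (M : RootedForest V)
    (μl μr : V → ℝ) (h : IsOGG G M μl μr) (htf : G.CliqueFree 3)
    (S : Set V) (hprim : ∀ v ∈ S, Primary M μl μr v)
    (hind : ∀ a ∈ S, ∀ b ∈ S, ¬ G.Adj a b)
    (v : V) (hv : v ∈ S) :
    ∀ u₁ ∈ S, ∀ u₂ ∈ S,
      (M.anc u₁ v ∧ ∃ x ∈ Pset M μl μr u₁, ∃ y ∈ Pset M μl μr v, M.anc x y ∧ G.Adj x y) →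
      (M.anc u₂ v ∧ ∃ x ∈ Pset M μl μr u₂, ∃ y ∈ Pset M μl μr v, M.anc x y ∧ G.Adj x y) →
      u₁ = u₂ := by
  intro u₁ hu₁ u₂ hu₂ h1 h2
  rcases anc_comparable M h1.1 h2.1 with heq | h12 | h21
  · exact heq
  · exact absurd (key M h htf hprim hind hv hu₁ hu₂ h12 h1 h2) not_false
  · exact absurd (key M h htf hprim hind hv hu₂ hu₁ h21 h2 h1) not_false
end

section
/- Let G be a triangle-free overlap game graph with meta-forest M and representation μ, and let k ≥ 1. If the subgraph of G induced on the set of primary vertices admits a proper coloring with k colors, then G admits a proper coloring with 2k colors. -/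
namespace OGGaux

variable {V : Type}

lemma anc_wf [Finite V] (M : RootedForest V) : WellFounded M.anc := by
  haveI : IsTrans V M.anc := ⟨fun _ _ _ => Relation.TransGen.trans⟩
  haveI : IsIrrefl V M.anc := ⟨M.acyclic⟩
  exact Finite.wellFounded_of_trans_of_irrefl _

lemma parent_anc {M : RootedForest V} {p v : V} (h : M.parent v = some p) : M.anc p v :=
  Relation.TransGen.single h

lemma anc_dest {M : RootedForest V} {w v : V} (h : M.anc w v) :
    ∃ p, M.parent v = some p ∧ (w = p ∨ M.anc w p) := by
  cases h with
  | single hr => exact ⟨w, hr, Or.inl rfl⟩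
  | tail hab hbc => exact ⟨_, hbc, Or.inr hab⟩

open Classical in
noncomputable def rt [Finite V] (M : RootedForest V) (μl μr : V → ℝ) : V → V :=
  (anc_wf M).fix (fun v IH =>
    if h : Secondary M μl μr v then IH h.choose (parent_anc h.choose_spec.1) else v)

open Classical in
lemma rt_eq [Finite V] (M : RootedForest V) (μl μr : V → ℝ) (v : V) :
    rt M μl μr v =
      if h : Secondary M μl μr v then rt M μl μr h.choose else v := by
  unfold rt
  exact WellFounded.fix_eq _ _ v

variable [Finite V] {M : RootedForest V} {μl μr : V → ℝ}

lemma rt_primary_self {v : V} (h : Primary M μl μr v) : rt M μl μr v = v := by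
  classical
  rw [rt_eq]
  exact dif_neg h

lemma rt_secondary {v : V} (h : Secondary M μl μr v) {p : V} (hp : M.parent v = some p) :
    rt M μl μr v = rt M μl μr p := by
  classical
  rw [rt_eq, dif_pos h]
  exact congrArg _ (Option.some.inj ((h.choose_spec.1).symm.trans hp))

lemma rt_primary (v : V) : Primary M μl μr (rt M μl μr v) := by
  classical
  refine (anc_wf M).induction (C := fun v => Primary M μl μr (rt M μl μr v)) v ?_
  intro v IH
  by_cases h : Secondary M μl μr v
  · rw [rt_eq, dif_pos h]
    exact IH _ (parent_anc h.choose_spec.1)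
  · rw [rt_eq, dif_neg h]
    exact h

lemma rt_anc (v : V) : rt M μl μr v = v ∨ M.anc (rt M μl μr v) v := by
  classical
  refine (anc_wf M).induction (C := fun v => rt M μl μr v = v ∨ M.anc (rt M μl μr v) v) v ?_
  intro v IH
  by_cases h : Secondary M μl μr v
  · have hp := parent_anc h.choose_spec.1
    rw [rt_eq, dif_pos h]
    rcases IH _ hp with h' | h'
    · right; rw [h']; exact hp
    · right; exact h'.trans hp
  · left; rw [rt_eq, dif_neg h]

lemma secondary_of_rt_ne {v : V} (h : rt M μl μr v ≠ v) : Secondary M μl μr v := by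
  by_contra hs
  exact h (rt_primary_self hs)



lemma sub_of_between (hogg : ∀ t : V, μl t < μr t) :
    ∀ v w : V, (w = v ∨ M.anc w v) → (w = rt M μl μr v ∨ M.anc (rt M μl μr v) w) →
      μl w ≤ μl v ∧ μr v ≤ μr w := by
  classical
  intro v
  refine (anc_wf M).induction
    (C := fun v => ∀ w : V, (w = v ∨ M.anc w v) →
      (w = rt M μl μr v ∨ M.anc (rt M μl μr v) w) → μl w ≤ μl v ∧ μr v ≤ μr w) v ?_
  intro v IH w h1 h2
  rcases h1 with rfl | h1
  · exact ⟨le_refl _, le_refl _⟩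
  have hsec : Secondary M μl μr v := by
    by_contra hs
    rw [rt_primary_self hs] at h2
    rcases h2 with rfl | h2
    · exact M.acyclic _ h1
    · exact M.acyclic _ (h2.trans h1)
  obtain ⟨p, hp, hsub⟩ := hsec
  have hple : μl p ≤ μl v ∧ μr v ≤ μr p :=
    (Set.Icc_subset_Icc_iff (hogg v).le).mp hsub
  have hrt : rt M μl μr v = rt M μl μr p := rt_secondary ⟨p, hp, hsub⟩ hp
  obtain ⟨p', hp', hwp⟩ := anc_dest h1
  rw [hp] at hp'
  obtain rfl : p = p' := Option.some.inj hp'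
  rw [hrt] at h2
  have := IH p (parent_anc hp) w hwp h2
  exact ⟨le_trans this.1 hple.1, le_trans hple.2 this.2⟩

lemma rt_eq_of_between :
    ∀ v w : V, (w = v ∨ M.anc w v) → (w = rt M μl μr v ∨ M.anc (rt M μl μr v) w) →
      rt M μl μr w = rt M μl μr v := by
  classical
  intro v
  refine (anc_wf M).induction
    (C := fun v => ∀ w : V, (w = v ∨ M.anc w v) →
      (w = rt M μl μr v ∨ M.anc (rt M μl μr v) w) → rt M μl μr w = rt M μl μr v) v ?_
  intro v IH w h1 h2
  rcases h1 with rfl | h1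
  · rfl
  have hsec : Secondary M μl μr v := by
    by_contra hs
    rw [rt_primary_self hs] at h2
    rcases h2 with rfl | h2
    · exact M.acyclic _ h1
    · exact M.acyclic _ (h2.trans h1)
  obtain ⟨p, hp, hsub⟩ := hsec
  have hrt : rt M μl μr v = rt M μl μr p := rt_secondary ⟨p, hp, hsub⟩ hp
  obtain ⟨p', hp', hwp⟩ := anc_dest h1
  rw [hp] at hp'
  obtain rfl : p = p' := Option.some.inj hp'
  rw [hrt] at h2 ⊢
  exact IH p (parent_anc hp) w hwp h2

lemma anc_trichotomy :
    ∀ v a b : V, M.anc a v → M.anc b v → a = b ∨ M.anc a b ∨ M.anc b a := by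
  intro v
  refine (anc_wf M).induction
    (C := fun v => ∀ a b : V, M.anc a v → M.anc b v →
      a = b ∨ M.anc a b ∨ M.anc b a) v ?_
  intro v IH a b ha hb
  obtain ⟨p, hp, hap⟩ := anc_dest ha
  obtain ⟨p2, hp2, hbp⟩ := anc_dest hb
  rw [hp] at hp2
  obtain rfl : p = p2 := Option.some.inj hp2
  rcases hap with rfl | hap
  · rcases hbp with rfl | hbp
    · exact Or.inl rfl
    · exact Or.inr (Or.inr hbp)
  · rcases hbp with rfl | hbp
    · exact Or.inr (Or.inl hap)
    · exact IH p (parent_anc hp) a b hap hbp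

/-- The set of primary ancestors-or-self of `u` whose interval contains that of `u`. -/
def pSet (M : RootedForest V) (μl μr : V → ℝ) (u : V) : Set V :=
  {p | Primary M μl μr p ∧ (p = u ∨ M.anc p u) ∧ μl p ≤ μl u ∧ μr u ≤ μr p}

noncomputable def dval [Finite V] (M : RootedForest V) (μl μr : V → ℝ) (u : V) : ℕ :=
  (pSet M μl μr u).ncard


lemma key {G : SimpleGraph V} (hogg : IsOGG G M μl μr) (htf : G.CliqueFree 3)
    {k : ℕ} (c : V → Fin k)
    (hc : ∀ x y, Primary M μl μr x → Primary M μl μr y → G.Adj x y → c x ≠ c y)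
    {x y : V} (hadj : G.Adj x y) (hxy : M.anc x y)
    (hcc : c (rt M μl μr x) = c (rt M μl μr y)) :
    dval M μl μr (rt M μl μr y) = dval M μl μr (rt M μl μr x) + 1 := by
  classical
  set u := rt M μl μr x with hu
  set u' := rt M μl μr y with hu'def
  have hPu : Primary M μl μr u := rt_primary x
  have hPu' : Primary M μl μr u' := rt_primary y
  have hov : IntervalOverlap (μl x) (μr x) (μl y) (μr y) := ((hogg.g2 x y).mp hadj).2
  have hg1xy : μl x < μl y := hogg.g1 x y hxy
  have hov1 : μl x < μl y ∧ μl y < μr x ∧ μr x < μr y := by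
    rcases hov with h | h
    · exact h
    · exact absurd h.1 (by linarith)
  -- u ≠ u'
  have huu' : u ≠ u' := by
    intro he
    have hre : rt M μl μr y = rt M μl μr x := by rw [← hu'def, ← he, hu]
    have hside : x = rt M μl μr y ∨ M.anc (rt M μl μr y) x := by
      rw [hre]
      rcases rt_anc (M := M) (μl := μl) (μr := μr) x with h | h
      · left; exact h.symm
      · right; exact h
    have hsub := sub_of_between hogg.nondeg y x (Or.inr hxy) hside
    linarith [hov1.2.2, hsub.2]
  -- x ≺ u'
  have hxu' : M.anc x u' := by
    rcases rt_anc (M := M) (μl := μl) (μr := μr) y with h | h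
    · rw [hu'def, h]; exact hxy
    · rcases anc_trichotomy y x u' hxy h with he | h2 | h2
      · exfalso
        have hpx : Primary M μl μr x := he ▸ hPu'
        have : u = x := by rw [hu]; exact rt_primary_self hpx
        exact huu' (this.trans he)
      · exact h2
      · exfalso
        have hq : rt M μl μr x = rt M μl μr y :=
          rt_eq_of_between y x (Or.inr hxy) (Or.inr h2)
        exact huu' (hu.trans (hq.trans hu'def.symm))
  -- μ(y) ⊆ μ(u')
  have hyu' : μl u' ≤ μl y ∧ μr y ≤ μr u' :=
    sub_of_between hogg.nondeg y u' (rt_anc y) (Or.inl rfl)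
  -- overlap (x, u') of type 1, hence adjacency
  have hovxu' : μl x < μl u' ∧ μl u' < μr x ∧ μr x < μr u' :=
    ⟨hogg.g1 x u' hxu', lt_of_le_of_lt hyu'.1 hov1.2.1, lt_of_lt_of_le hov1.2.2 hyu'.2⟩
  have hadjxu' : G.Adj x u' := (hogg.g2 x u').mpr ⟨Or.inl hxu', Or.inl hovxu'⟩
  -- x ≠ u
  have hxu : x ≠ u := by
    intro he
    have hpx : Primary M μl μr x := he ▸ hPu
    exact hc x u' hpx hPu' hadjxu' (by rw [he]; exact hcc)
  have hux : M.anc u x := by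
    rcases rt_anc (M := M) (μl := μl) (μr := μr) x with h | h
    · exact absurd ((hu.trans h).symm) hxu
    · exact h
  have hxsub : μl u ≤ μl x ∧ μr x ≤ μr u :=
    sub_of_between hogg.nondeg x u (rt_anc x) (Or.inl rfl)
  have hlux : μl u < μl x := lt_of_le_of_ne hxsub.1 (hogg.endpoints_l u x (Ne.symm hxu))
  have hrxu : μr x < μr u := lt_of_le_of_ne hxsub.2 (hogg.endpoints_r x u hxu)
  have huu'anc : M.anc u u' := hux.trans hxu'
  -- μ(u') ⊂ μ(u)
  have hlu : μl u < μl u' := lt_trans hlux hovxu'.1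
  have hru : μr u' < μr u := by
    have hne : μr u ≠ μr u' := hogg.endpoints_r u u' huu'
    rcases lt_or_gt_of_ne hne with hlt | hgt
    · exfalso
      have hadjuu' : G.Adj u u' := (hogg.g2 u u').mpr
        ⟨Or.inl huu'anc, Or.inl ⟨hlu, by linarith [hovxu'.2.1], hlt⟩⟩
      exact hc u u' hPu hPu' hadjuu' hcc
    · exact hgt
  -- the counting step
  have hset : pSet M μl μr u' = insert u' (pSet M μl μr u) := by
    ext p
    simp only [pSet, Set.mem_setOf_eq, Set.mem_insert_iff]
    constructor
    · rintro ⟨hPp, hpu', hpl, hpr⟩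
      by_cases hpe : p = u'
      · exact Or.inl hpe
      right
      have hpanc : M.anc p u' := hpu'.resolve_left hpe
      have hplt : μl p < μl u' := lt_of_le_of_ne hpl (hogg.endpoints_l p u' hpe)
      have hprt : μr u' < μr p := lt_of_le_of_ne hpr (hogg.endpoints_r u' p (Ne.symm hpe))
      rcases anc_trichotomy u' p u hpanc huu'anc with he | h2 | h2
      · subst he
        exact ⟨hPp, Or.inl rfl, le_refl _, le_refl _⟩
      · -- p strict ancestor of u
        refine ⟨hPp, Or.inr h2, (hogg.g1 p u h2).le, ?_⟩
        by_contra hleur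
        push_neg at hleur
        apply hogg.g3
        have hnd := hogg.nondeg u'
        refine ⟨p, u, x, h2, hux, Or.inl ⟨hogg.g1 p u h2, by linarith, hleur⟩, ?_⟩
        refine Set.subset_inter (Set.Icc_subset_Icc ?_ ?_) (Set.Icc_subset_Icc ?_ ?_)
        · linarith [hogg.g1 p u h2]
        · linarith [hovxu'.2.2]
        · exact hxsub.1
        · exact hxsub.2
      · -- u strict ancestor of p
        exfalso
        rcases anc_trichotomy u' p x hpanc hxu' with he | h3 | h3
        · -- p = x, but x is secondary
          have hsecx : Secondary M μl μr x := secondary_of_rt_ne (by rw [← hu]; exact Ne.symm hxu)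
          exact hPp (he ▸ hsecx)
        · -- p strictly between u and x, hence secondary
          have hrtp : rt M μl μr p = u := by
            rw [hu]
            exact rt_eq_of_between x p (Or.inr h3) (Or.inr (by rw [← hu]; exact h2))
          have hpnu : p ≠ u := by
            intro he2
            exact M.acyclic u (he2 ▸ h2)
          exact hPp (secondary_of_rt_ne (by rw [hrtp]; exact hpnu.symm))
        · -- x strict ancestor of p : the main case
          have hW1 : μl x < μl p := hogg.g1 x p h3
          have hovxp : IntervalOverlap (μl x) (μr x) (μl p) (μr p) :=
            Or.inl ⟨hW1, by linarith [hovxu'.2.1], by linarith [hovxu'.2.2]⟩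
          have hadjxp : G.Adj x p := (hogg.g2 x p).mpr ⟨Or.inl h3, hovxp⟩
          obtain ⟨q', hq', hpq'⟩ := anc_dest hpanc
          have hq'anc : M.anc q' u' := parent_anc hq'
          have hq'l : μl q' < μl u' := hogg.g1 q' u' hq'anc
          have hq'r : μr q' < μr u' := by
            by_contra hle
            push_neg at hle
            exact hPu' ⟨q', hq', (Set.Icc_subset_Icc_iff (hogg.nondeg u').le).mpr ⟨hq'l.le, hle⟩⟩
          have hpq'2 : M.anc p q' := by
            rcases hpq' with rfl | hh
            · exfalso; linarith
            · exact hh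
          have hPq' : μl p < μl q' := hogg.g1 p q' hpq'2
          have hq'nx : q' ≠ x := by
            intro he2
            exact M.acyclic x (he2 ▸ (h3.trans hpq'2))
          rcases lt_or_gt_of_ne (hogg.endpoints_r q' x hq'nx) with hQb | hQb
          · -- G3 contradiction with (x, p, q')
            apply hogg.g3
            refine ⟨x, p, q', h3, hpq'2, hovxp, ?_⟩
            refine Set.subset_inter (Set.Icc_subset_Icc ?_ ?_) (Set.Icc_subset_Icc ?_ ?_)
            · linarith
            · linarith
            · linarith
            · linarith [hovxu'.2.2]
          · -- triangle x, q', u'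
            have hadjxq' : G.Adj x q' := (hogg.g2 x q').mpr
              ⟨Or.inl (h3.trans hpq'2), Or.inl ⟨by linarith, by linarith [hovxu'.2.1], hQb⟩⟩
            have hadjq'u' : G.Adj q' u' := (hogg.g2 q' u').mpr
              ⟨Or.inl hq'anc, Or.inl ⟨hq'l, by linarith [hovxu'.2.1], hq'r⟩⟩
            exact htf {x, q', u'}
              (SimpleGraph.is3Clique_triple_iff.mpr ⟨hadjxq', hadjxu', hadjq'u'⟩)
    · rintro (rfl | ⟨hPp, hpu, hpl, hpr⟩)
      · exact ⟨hPu', Or.inl rfl, le_refl _, le_refl _⟩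
      · refine ⟨hPp, Or.inr ?_, by linarith, by linarith⟩
        rcases hpu with rfl | hh
        · exact huu'anc
        · exact hh.trans huu'anc
  have hnotmem : u' ∉ pSet M μl μr u := by
    rintro ⟨_, h1, _, _⟩
    rcases h1 with he | hh
    · exact huu' he.symm
    · exact M.acyclic u' (hh.trans huu'anc)
  rw [dval, dval, hset, Set.ncard_insert_of_notMem hnotmem]

end OGGaux

/-- If the subgraph of a triangle-free overlap game graph induced on the primary
vertices has a proper coloring with `k` colors, then the whole graph has a proper
coloring with `2 * k` colors. -/
theorem stmt10 {V : Type} [Fintype V] (G : SimpleGraph V) (M : RootedForest V)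
    (μl μr : V → ℝ) (h : IsOGG G M μl μr) (htf : G.CliqueFree 3)
    (k : ℕ) (hk : 1 ≤ k) (c : V → Fin k)
    (hc : ∀ x y, Primary M μl μr x → Primary M μl μr y → G.Adj x y → c x ≠ c y) :
    G.Colorable (2 * k) := by
  classical
  have hfin : Finite V := inferInstance
  set f : V → Fin (2 * k) := fun v =>
    ⟨2 * (c (OGGaux.rt M μl μr v)).val + OGGaux.dval M μl μr (OGGaux.rt M μl μr v) % 2,
      by have := (c (OGGaux.rt M μl μr v)).isLt; omega⟩ with hf
  refine ⟨SimpleGraph.Coloring.mk f ?_⟩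
  intro v w hadj heq
  have hval : 2 * (c (OGGaux.rt M μl μr v)).val + OGGaux.dval M μl μr (OGGaux.rt M μl μr v) % 2
      = 2 * (c (OGGaux.rt M μl μr w)).val + OGGaux.dval M μl μr (OGGaux.rt M μl μr w) % 2 := by
    simpa [hf] using congrArg Fin.val heq
  have hcv : (c (OGGaux.rt M μl μr v)).val = (c (OGGaux.rt M μl μr w)).val := by
    have h1 := (c (OGGaux.rt M μl μr v)).isLt
    have h2 := (c (OGGaux.rt M μl μr w)).isLt
    omega
  have hceq : c (OGGaux.rt M μl μr v) = c (OGGaux.rt M μl μr w) := Fin.ext hcv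
  rcases ((h.g2 v w).mp hadj).1 with ha | ha
  · have := OGGaux.key h htf c hc hadj ha hceq
    omega
  · have := OGGaux.key h htf c hc hadj.symm ha hceq.symm
    omega
end

section
/- Let G be a triangle-free overlap game graph with meta-forest M and representation μ in which every vertex is primary, and let P be the set of vertices of a root-to-leaf path of M. Then for every v ∈ P there is at most one w ∈ P such that v ≺ w and v is adjacent to w in G. -/
lemma anc_ne_s11 {V : Type} (M : RootedForest V) {x y : V} (hxy : M.anc x y) : x ≠ y := by
  rintro rfl
  exact M.acyclic x hxy

/-- Ancestors of a common vertex are totally ordered. -/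
lemma anc_tri {V : Type} (M : RootedForest V) {a z : V} (haz : M.anc a z) :
    ∀ b, M.anc b z → a = b ∨ M.anc a b ∨ M.anc b a := by
  induction haz with
  | single h =>
    intro b hbz
    cases hbz with
    | single h' => exact Or.inl (Option.some.inj (h.symm.trans h'))
    | tail hbp hp =>
      right; right
      have : _ = a := Option.some.inj (hp.symm.trans h)
      exact this ▸ hbp
  | tail hap hpz ih =>
    intro b hbz
    cases hbz with
    | single h' =>
      have hb : b = _ := Option.some.inj (h'.symm.trans hpz)
      right; left; exact hb ▸ hap
    | tail hbq hq =>
      have : _ = _ := Option.some.inj (hq.symm.trans hpz)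
      exact ih b (this ▸ hbq)

/-- If all vertices are primary, no strict descendant's interval is contained
in an ancestor's interval. -/
lemma no_contain {V : Type} {G : SimpleGraph V} {M : RootedForest V} {μl μr : V → ℝ}
    (h : IsOGG G M μl μr) (hprim : ∀ v, Primary M μl μr v)
    {x y : V} (hanc : M.anc x y) : μl x < μl y → μr y < μr x → False := by
  induction hanc with
  | single hp =>
    intro h1 h2
    exact hprim _ ⟨_, hp, Set.Icc_subset_Icc h1.le h2.le⟩
  | tail hap hpz ih =>
    intro h1 h2
    rename_i p z
    -- z is primary, parent p, and ℓ p < ℓ z, so r p < r z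
    have hlp : μl p < μl z := h.g1 _ _ (Relation.TransGen.single hpz)
    have hrp : μr p < μr z := by
      by_contra hle
      exact hprim z ⟨p, hpz, Set.Icc_subset_Icc hlp.le (not_lt.mp hle)⟩
    exact ih (h.g1 _ _ hap) (hrp.trans h2)

lemma overlap_dir {V : Type} {G : SimpleGraph V} {M : RootedForest V} {μl μr : V → ℝ}
    (h : IsOGG G M μl μr) {v w : V} (hanc : M.anc v w) (hadj : G.Adj v w) :
    μl v < μl w ∧ μl w < μr v ∧ μr v < μr w := by
  have hl := h.g1 _ _ hanc
  rcases ((h.g2 v w).mp hadj).2 with h1 | h2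
  · exact h1
  · exact absurd h2.1 (not_lt.mpr hl.le)

lemma key_lemma {V : Type} {G : SimpleGraph V} {M : RootedForest V} {μl μr : V → ℝ}
    (h : IsOGG G M μl μr) (htf : G.CliqueFree 3) (hprim : ∀ v, Primary M μl μr v)
    {v w₁ w₂ : V} (h1 : M.anc v w₁) (ha1 : G.Adj v w₁)
    (h2 : M.anc v w₂) (ha2 : G.Adj v w₂) (h12 : M.anc w₁ w₂) : False := by
  classical
  obtain ⟨o1l, o1m, o1r⟩ := overlap_dir h h1 ha1
  obtain ⟨o2l, o2m, o2r⟩ := overlap_dir h h2 ha2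
  have hlw : μl w₁ < μl w₂ := h.g1 _ _ h12
  have hne : w₁ ≠ w₂ := anc_ne_s11 M h12
  rcases lt_or_gt_of_ne (h.endpoints_r w₁ w₂ hne) with hr | hr
  · -- w₁ and w₂ overlap, so triangle v w₁ w₂
    have hadj : G.Adj w₁ w₂ := (h.g2 w₁ w₂).mpr
      ⟨Or.inl h12, Or.inl ⟨hlw, o2m.trans o1r, hr⟩⟩
    exact htf {v, w₁, w₂} (SimpleGraph.is3Clique_triple_iff.mpr ⟨ha1, ha2, hadj⟩)
  · -- μ(w₂) ⊆ μ(w₁), contradiction with primality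
    exact no_contain h hprim h12 hlw hr

/-- In a triangle-free overlap game graph all of whose vertices are primary, every
vertex of a root-to-leaf path `P` of `M` has at most one neighbor below it on `P`. -/
theorem stmt11 {V : Type} [Fintype V] (G : SimpleGraph V) (M : RootedForest V)
    (μl μr : V → ℝ) (h : IsOGG G M μl μr) (htf : G.CliqueFree 3)
    (hprim : ∀ v, Primary M μl μr v)
    (P : Set V) (hP : RootToLeafPath M P) :
    ∀ v ∈ P, ∀ w₁ ∈ P, ∀ w₂ ∈ P,
      M.anc v w₁ → G.Adj v w₁ → M.anc v w₂ → G.Adj v w₂ → w₁ = w₂ := by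
  obtain ⟨z, _, rfl⟩ := hP
  intro v _ w₁ hw₁ w₂ hw₂ h1 ha1 h2 ha2
  by_contra hne
  -- w₁ and w₂ are comparable, being ancestors of (or equal to) z
  have hcomp : M.anc w₁ w₂ ∨ M.anc w₂ w₁ := by
    rcases hw₁ with rfl | hw₁ <;> rcases hw₂ with rfl | hw₂
    · exact absurd rfl hne
    · exact Or.inr hw₂
    · exact Or.inl hw₁
    · rcases anc_tri M hw₁ w₂ hw₂ with rfl | hc | hc
      · exact absurd rfl hne
      · exact Or.inl hc
      · exact Or.inr hc
  rcases hcomp with hc | hc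
  · exact key_lemma h htf hprim h1 ha1 h2 ha2 hc
  · exact key_lemma h htf hprim h2 ha2 h1 ha1 hc
end

section
/- Let G be a triangle-free overlap game graph with meta-forest M and representation μ in which every vertex is primary, and let P be the set of vertices of a root-to-leaf path of M. Then there are no four vertices v₁, v₂, v₃, v₄ ∈ P with v₁ ≺ v₂ ≺ v₃ ≺ v₄ such that v₁ is adjacent to v₃ in G and v₂ is adjacent to v₄ in G. -/
lemma anc_r_lt {V : Type} {G : SimpleGraph V} {M : RootedForest V} {μl μr : V → ℝ}
    (h : IsOGG G M μl μr) (hprim : ∀ v, Primary M μl μr v) :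
    ∀ x y, M.anc x y → μr x < μr y := by
  intro x y hxy
  induction hxy with
  | single hp =>
    rename_i b
    have hl : μl x < μl b := h.g1 x b (Relation.TransGen.single hp)
    have hnc : ¬ Set.Icc (μl b) (μr b) ⊆ Set.Icc (μl x) (μr x) := by
      intro hc
      exact hprim b ⟨x, hp, hc⟩
    by_contra hle
    push_neg at hle
    exact hnc (Set.Icc_subset_Icc hl.le hle)
  | tail hab hp ih =>
    rename_i b c
    have hl : μl b < μl c := h.g1 b c (Relation.TransGen.single hp)
    have hnc : ¬ Set.Icc (μl c) (μr c) ⊆ Set.Icc (μl b) (μr b) := by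
      intro hc
      exact hprim c ⟨b, hp, hc⟩
    have : μr b < μr c := by
      by_contra hle
      push_neg at hle
      exact hnc (Set.Icc_subset_Icc hl.le hle)
    exact lt_trans ih this

/-- In a triangle-free overlap game graph all of whose vertices are primary, no two
edges along a root-to-leaf path of `M` overlap. -/
theorem stmt12 {V : Type} [Fintype V] (G : SimpleGraph V) (M : RootedForest V)
    (μl μr : V → ℝ) (h : IsOGG G M μl μr) (htf : G.CliqueFree 3)
    (hprim : ∀ v, Primary M μl μr v)
    (P : Set V) (hP : RootToLeafPath M P) :
    ¬ ∃ v₁ ∈ P, ∃ v₂ ∈ P, ∃ v₃ ∈ P, ∃ v₄ ∈ P,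
      M.anc v₁ v₂ ∧ M.anc v₂ v₃ ∧ M.anc v₃ v₄ ∧ G.Adj v₁ v₃ ∧ G.Adj v₂ v₄ := by
  classical
  rintro ⟨v₁, _, v₂, _, v₃, _, v₄, _, h12, h23, h34, a13, a24⟩
  have hl12 := h.g1 _ _ h12
  have hl23 := h.g1 _ _ h23
  have hl34 := h.g1 _ _ h34
  have hr12 := anc_r_lt h hprim _ _ h12
  have hr23 := anc_r_lt h hprim _ _ h23
  have hr34 := anc_r_lt h hprim _ _ h34
  have hl13 := h.g1 _ _ (h12.trans h23)
  -- extract overlap info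
  have o13 := ((h.g2 v₁ v₃).1 a13).2
  have o24 := ((h.g2 v₂ v₄).1 a24).2
  have key13 : μl v₃ < μr v₁ := by
    rcases o13 with ⟨_, h2, _⟩ | ⟨h1, _, _⟩
    · exact h2
    · exact absurd hl13 (not_lt.2 h1.le)
  have key24 : μl v₄ < μr v₂ := by
    rcases o24 with ⟨_, h2, _⟩ | ⟨h1, _, _⟩
    · exact h2
    · exact absurd (hl23.trans hl34) (not_lt.2 h1.le)
  -- v₂ ~ v₃
  have a23 : G.Adj v₂ v₃ := (h.g2 v₂ v₃).2
    ⟨Or.inl h23, Or.inl ⟨hl23, lt_trans key13 hr12, hr23⟩⟩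
  have a34 : G.Adj v₃ v₄ := (h.g2 v₃ v₄).2
    ⟨Or.inl h34, Or.inl ⟨hl34, lt_trans key24 hr23, hr34⟩⟩
  exact htf {v₂, v₃, v₄} (SimpleGraph.is3Clique_triple_iff.2 ⟨a23, a24, a34⟩)
end
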